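/- arXiv:2105.00386 — 8 statements merged into one kernel-verified Lean document; each statement's English description precedes it below -/
import Mathlib

section
/- Let K be a field of characteristic zero, n ≥ 2, and let a1,...,a_{n-1} be elements of K. Let D be the K-derivation of K[x1,...,xn] given by D = Σ_{i=1}^{n-2} a_i·x_i·∂_{x_i} + (a_{n-1}·x_{n-1} + x_n)·∂_{x_{n-1}} + a_{n-1}·x_n·∂_{x_n}. Then the image of D contains the ideal of K[x1,...,xn] generated by x_n. -/
open MvPolynomial

/-- The derivation `D = Σ_{i=1}^{n-2} a_i x_i ∂_i + (a_{n-1} x_{n-1} + x_n) ∂_{n-1}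
+ a_{n-1} x_n ∂_n` of `K[x_1, …, x_n]` (here with `n + 2` variables, `n ≥ 0`,
indexed by `Fin (n+2)`, and coefficients `a_1, …, a_{n+1}` indexed by `Fin (n+1)`),
as a `K`-linear map. -/
noncomputable def triangularDerivation {K : Type*} [Field K] (n : ℕ) (a : Fin (n + 1) → K) :
    MvPolynomial (Fin (n + 2)) K →ₗ[K] MvPolynomial (Fin (n + 2)) K :=
  ∑ i : Fin (n + 2),
    (LinearMap.mulLeft K
      (if _h : (i : ℕ) < n then a ⟨i, by omega⟩ • X i
       else if (i : ℕ) = n then a (Fin.last n) • X i + X (Fin.last (n + 1))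
       else a (Fin.last n) • X (Fin.last (n + 1)))).comp
      (pderiv i).toLinearMap

open Finsupp

set_option linter.unusedSectionVars false

section Aux
variable {K : Type*} [Field K] (n : ℕ) (a : Fin (n + 1) → K)

/-- coefficient vector -/
def bcoef (i : Fin (n + 2)) : K := if h : (i : ℕ) < n then a ⟨i, by omega⟩ else a (Fin.last n)

/-- weight -/
def wgt (α : Fin (n + 2) →₀ ℕ) : K := ∑ i, bcoef n a i * (α i : K)

abbrev Mid : Fin (n + 2) := ⟨n, by omega⟩
abbrev Lst : Fin (n + 2) := Fin.last (n + 1)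

lemma helper1 (i : Fin (n + 2)) (α : Fin (n + 2) →₀ ℕ) :
    (X i : MvPolynomial (Fin (n + 2)) K) * monomial (α - single i 1) ((α i : K))
      = (α i : K) • monomial α 1 := by
  rcases Nat.eq_zero_or_pos (α i) with h | h
  · simp [h]
  · rw [X, monomial_mul, one_mul, add_tsub_cancel_of_le (by
      rw [Finsupp.single_le_iff]; exact h)]
    rw [smul_monomial, smul_eq_mul, mul_one]

lemma helper2 (j : Fin (n + 2)) (β : Fin (n + 2) →₀ ℕ) (c : K) :
    (X j : MvPolynomial (Fin (n + 2)) K) * monomial β c = c • monomial (β + single j 1) 1 := by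
  rw [X, monomial_mul, one_mul, smul_monomial, smul_eq_mul, mul_one, add_comm β (single j 1)]

lemma triD_monomial (α : Fin (n + 2) →₀ ℕ) :
    triangularDerivation n a (monomial α 1)
      = wgt n a α • monomial α 1
        + (α (Mid n) : K) • monomial (α - single (Mid n) 1 + single (Lst n) 1) 1 := by
  rw [triangularDerivation, LinearMap.sum_apply]
  have hterm : ∀ i : Fin (n + 2),
      ((LinearMap.mulLeft K
        (if _h : (i : ℕ) < n then a ⟨i, by omega⟩ • X i
         else if (i : ℕ) = n then a (Fin.last n) • X i + X (Fin.last (n + 1))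
         else a (Fin.last n) • X (Fin.last (n + 1)))).comp
        (pderiv i).toLinearMap) (monomial α 1)
      = (bcoef n a i * (α i : K)) • monomial α 1
        + (if i = Mid n then
            (α (Mid n) : K) • monomial (α - single (Mid n) 1 + single (Lst n) 1) 1 else 0) := by
    intro i
    simp only [LinearMap.comp_apply, LinearMap.mulLeft_apply]
    rw [show ((pderiv i).toLinearMap (monomial α (1:K))) = pderiv i (monomial α 1) from rfl,
      pderiv_monomial, one_mul]
    by_cases h : (i : ℕ) < n
    · have hi : i ≠ Mid n := by
        intro e; rw [e] at h; simp at h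
      rw [dif_pos h, if_neg hi, smul_mul_assoc, helper1, bcoef, dif_pos h, mul_smul, add_zero]
    · by_cases h2 : (i : ℕ) = n
      · have hi : i = Mid n := by ext; exact h2
        subst hi
        rw [dif_neg h, if_pos h2, if_pos rfl, add_mul, smul_mul_assoc, helper1,
          bcoef, dif_neg h, mul_smul, helper2]
      · have hi : i = Lst n := by
          ext; simp only [Lst, Fin.val_last]; omega
        have hne : i ≠ Mid n := by
          rw [hi]; intro e; have := congrArg Fin.val e; simp [Lst, Mid] at this
        subst hi
        rw [dif_neg h, if_neg h2, if_neg hne, smul_mul_assoc, helper1,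
          bcoef, dif_neg h, mul_smul, add_zero]
  rw [Finset.sum_congr rfl fun i _ => hterm i, Finset.sum_add_distrib]
  congr 1
  · rw [wgt, Finset.sum_smul]
  · rw [Finset.sum_ite_eq' Finset.univ (Mid n)]
    simp

lemma wgt_add (α β : Fin (n + 2) →₀ ℕ) : wgt n a (α + β) = wgt n a α + wgt n a β := by
  simp [wgt, mul_add, Finset.sum_add_distrib]

lemma wgt_single (j : Fin (n + 2)) : wgt n a (single j 1) = bcoef n a j := by
  rw [wgt, Finset.sum_eq_single j] <;> simp +contextual [single_apply, eq_comm]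

lemma bcoef_mid_eq_lst : bcoef n a (Mid n) = bcoef n a (Lst n) := by
  simp [bcoef, Mid, Lst]

end Aux

section Main
variable {K : Type*} [Field K] [CharZero K] (n : ℕ) (a : Fin (n + 1) → K)

lemma step (β : Fin (n + 2) →₀ ℕ)
    (hrec : monomial (β - single (Mid n) 1 + single (Lst n) 1 + single (Lst n) 1) (1 : K)
        ∈ LinearMap.range (triangularDerivation (K := K) n a) ∨ β (Mid n) = 0) :
    monomial (β + single (Lst n) 1) (1 : K)
      ∈ LinearMap.range (triangularDerivation (K := K) n a) := by
  set R := LinearMap.range (triangularDerivation (K := K) n a)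
  by_cases hμ : wgt n a (β + single (Lst n) 1) = 0
  · -- use monomial (β + e_M)
    have key := triD_monomial n a (β + single (Mid n) 1)
    have h1 : wgt n a (β + single (Mid n) 1) = 0 := by
      rw [wgt_add, wgt_single, bcoef_mid_eq_lst, ← wgt_single n a (Lst n), ← wgt_add]
      exact hμ
    have h2 : ((β + single (Mid n) 1 : Fin (n+2) →₀ ℕ)) (Mid n) = β (Mid n) + 1 := by simp
    have h3 : β + single (Mid n) 1 - single (Mid n) 1 = β := add_tsub_cancel_right _ _
    rw [h1, h2, h3, zero_smul, zero_add] at key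
    have hnz : ((β (Mid n) + 1 : ℕ) : K) ≠ 0 := by
      norm_cast
    have : monomial (β + single (Lst n) 1) (1 : K)
        = ((β (Mid n) + 1 : ℕ) : K)⁻¹ • triangularDerivation (K := K) n a
            (monomial (β + single (Mid n) 1) 1) := by
      rw [key, smul_smul, inv_mul_cancel₀ hnz, one_smul]
    rw [this]
    exact Submodule.smul_mem _ _ (LinearMap.mem_range_self _ _)
  · have key := triD_monomial n a (β + single (Lst n) 1)
    have h2 : ((β + single (Lst n) 1 : Fin (n+2) →₀ ℕ)) (Mid n) = β (Mid n) := by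
      simp [single_apply, Mid, Lst, Fin.ext_iff]
    have h3 : β + single (Lst n) 1 - single (Mid n) 1 = β - single (Mid n) 1 + single (Lst n) 1 := by
      have hLM : Lst n ≠ Mid n := by
        intro e; have := congrArg Fin.val e; simp [Lst, Mid] at this
      ext j
      simp only [Finsupp.tsub_apply, Finsupp.add_apply, Finsupp.single_apply]
      rcases eq_or_ne (Mid n) j with rfl | hj
      · rw [if_neg hLM, if_pos rfl]; omega
      · rw [if_neg hj]; omega
    rw [h2, h3] at key
    have hmem : (β (Mid n) : K) •
        monomial (β - single (Mid n) 1 + single (Lst n) 1 + single (Lst n) 1) (1 : K) ∈ R := by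
      rcases hrec with h | h
      · exact Submodule.smul_mem _ _ h
      · simp [h]
    have : monomial (β + single (Lst n) 1) (1 : K)
        = (wgt n a (β + single (Lst n) 1))⁻¹ •
          (triangularDerivation (K := K) n a (monomial (β + single (Lst n) 1) 1)
            - (β (Mid n) : K) •
              monomial (β - single (Mid n) 1 + single (Lst n) 1 + single (Lst n) 1) 1) := by
      rw [key]; rw [add_sub_cancel_right, smul_smul, inv_mul_cancel₀ hμ, one_smul]
    rw [this]
    exact Submodule.smul_mem _ _ (Submodule.sub_mem _ (LinearMap.mem_range_self _ _) hmem)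

lemma main_mono (β : Fin (n + 2) →₀ ℕ) :
    monomial (β + single (Lst n) 1) (1 : K)
      ∈ LinearMap.range (triangularDerivation (K := K) n a) := by
  suffices h : ∀ k (β : Fin (n + 2) →₀ ℕ), β (Mid n) ≤ k →
      monomial (β + single (Lst n) 1) (1 : K)
        ∈ LinearMap.range (triangularDerivation (K := K) n a) from h _ β le_rfl
  intro k
  induction k with
  | zero => intro β hβ; exact step n a β (Or.inr (Nat.le_zero.mp hβ))
  | succ k ih =>
    intro β hβ
    by_cases h0 : β (Mid n) = 0
    · exact step n a β (Or.inr h0)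
    · refine step n a β (Or.inl (ih (β - single (Mid n) 1 + single (Lst n) 1) ?_))
      have : ((β - single (Mid n) 1 + single (Lst n) 1 : Fin (n+2) →₀ ℕ)) (Mid n) = β (Mid n) - 1 := by
        simp [single_apply, Mid, Lst, Fin.ext_iff]
      omega

end Main

theorem image_contains_ideal_xn
    {K : Type*} [Field K] [CharZero K] (n : ℕ) (a : Fin (n + 1) → K) :
    Submodule.restrictScalars K (Ideal.span {X (Fin.last (n + 1))})
      ≤ LinearMap.range (triangularDerivation (K := K) n a) := by
  intro p hp
  rw [Submodule.restrictScalars_mem, Ideal.mem_span_singleton] at hp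
  obtain ⟨q, rfl⟩ := hp
  induction q using MvPolynomial.induction_on' with
  | monomial α c =>
    rw [helper2]
    exact Submodule.smul_mem _ _ (main_mono n a α)
  | add p q hp hq =>
    rw [mul_add]
    exact Submodule.add_mem _ hp hq
end

section
/- Let K be a field of characteristic zero, n ≥ 2, and let a1,...,a_{n-1} be elements of K. Let φ be the K-algebra endomorphism of K[x1,...,xn] defined by φ(x_i) = a_i·x_i for 1 ≤ i ≤ n−2, φ(x_{n-1}) = a_{n-1}·x_{n-1} + x_n, and φ(x_n) = a_{n-1}·x_n, and let δ = id − φ. Then the image of δ contains the ideal of K[x1,...,xn] generated by x_n. -/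
open MvPolynomial

lemma phi_monomial_diag {K σ : Type*} [CommSemiring K]
    (φ : MvPolynomial σ K →ₐ[K] MvPolynomial σ K) (b : σ → K) (d : σ →₀ ℕ)
    (hb : ∀ i ∈ d.support, φ (X i) = C (b i) * X i) :
    φ (monomial d 1) = C (∏ i ∈ d.support, b i ^ d i) * monomial d 1 := by
  have h : φ (monomial d 1) = ∏ i ∈ d.support, (C (b i) * X i) ^ d i := by
    rw [monomial_eq, C_1, one_mul, Finsupp.prod, map_prod]
    exact Finset.prod_congr rfl fun i hi => by rw [map_pow, hb i hi]
  rw [h, monomial_eq, C_1, one_mul, Finsupp.prod, map_prod, ← Finset.prod_mul_distrib]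
  exact Finset.prod_congr rfl fun i hi => by rw [mul_pow, map_pow]

lemma key_binomial {K : Type*} [Field K] {σ : Type*}
    (φ : MvPolynomial σ K →ₐ[K] MvPolynomial σ K)
    (y t : σ) (a' : K)
    (hy : φ (X y) = C a' * X y + X t) (ht : φ (X t) = C a' * X t)
    (d' : σ →₀ ℕ) (E : K) (hd : φ (monomial d' 1) = C E * monomial d' 1)
    (j k : ℕ) :
    φ (monomial d' 1 * X y ^ j * X t ^ k)
      = ∑ s ∈ Finset.range (j+1),
          C (E * a' ^ (k+s) * (j.choose s : K)) * (monomial d' 1 * X y ^ s * X t ^ (k + (j - s))) := by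
  rw [map_mul, map_mul, map_pow, map_pow, hd, hy, ht, add_pow, Finset.mul_sum, Finset.sum_mul]
  refine Finset.sum_congr rfl fun s hs => ?_
  have h1 : k + (j - s) = (j - s) + k := by omega
  rw [h1]
  simp only [C_mul, C_pow, MvPolynomial.C_eq_coe_nat]
  ring

theorem image_of_triangular_E_derivation_contains_ideal_xn
    {K : Type*} [Field K] [CharZero K] (n : ℕ) (a : Fin (n + 1) → K)
    (φ : MvPolynomial (Fin (n + 2)) K →ₐ[K] MvPolynomial (Fin (n + 2)) K)
    (hφ1 : ∀ i : Fin n, φ (X (Fin.castLE (by omega) i))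
      = a (Fin.castSucc i) • X (Fin.castLE (by omega) i))
    (hφ2 : φ (X (Fin.castSucc (Fin.last n)))
      = a (Fin.last n) • X (Fin.castSucc (Fin.last n)) + X (Fin.last (n + 1)))
    (hφ3 : φ (X (Fin.last (n + 1))) = a (Fin.last n) • X (Fin.last (n + 1)))
    (δ : MvPolynomial (Fin (n + 2)) K →ₗ[K] MvPolynomial (Fin (n + 2)) K)
    (hδ : δ = LinearMap.id - φ.toLinearMap) :
    Submodule.restrictScalars K (Ideal.span {X (Fin.last (n + 1))})
      ≤ LinearMap.range δ := by
  subst hδ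
  set t : Fin (n + 2) := Fin.last (n + 1) with htdef
  set y : Fin (n + 2) := Fin.castSucc (Fin.last n) with hydef
  set a' : K := a (Fin.last n) with ha'def
  have hyt : y ≠ t := by
    rw [hydef, htdef]
    intro hyt
    have h := congrArg Fin.val hyt
    simp only [Fin.coe_castSucc, Fin.val_last] at h
    omega
  set b : Fin (n + 2) → K := fun i => if h : (i : ℕ) < n then a ⟨i, by omega⟩ else a' with hbdef
  have hb : ∀ i : Fin (n + 2), i ≠ y → φ (X i) = C (b i) * X i := by
    intro i hi
    by_cases h : (i : ℕ) < n
    · have hcast : Fin.castLE (by omega : n ≤ n + 2) (⟨(i : ℕ), h⟩ : Fin n) = i := rfl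
      have h1 := hφ1 ⟨(i : ℕ), h⟩
      rw [hcast] at h1
      have hbv : b i = a (Fin.castSucc (⟨(i : ℕ), h⟩ : Fin n)) := by
        simp only [hbdef]; exact dif_pos h
      rw [h1, smul_eq_C_mul, hbv]
    · have hn : (i : ℕ) ≠ n := by
        intro hc
        refine hi (Fin.ext ?_)
        rw [hydef, hc]
        simp
      have hi' : i = t := by
        apply Fin.ext
        have h2 := i.isLt
        rw [htdef]
        simp only [Fin.val_last]
        omega
      subst hi'
      have hbv : b t = a' := by simp only [hbdef]; exact dif_neg h
      rw [hφ3, smul_eq_C_mul, hbv]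
  have hE : ∀ d' : Fin (n + 2) →₀ ℕ, d' y = 0 →
      φ (monomial d' 1) = C (∏ i ∈ d'.support, b i ^ d' i) * monomial d' 1 := by
    intro d' h
    refine phi_monomial_diag φ b d' fun i hi => hb i fun e => ?_
    rw [e, Finsupp.mem_support_iff] at hi
    exact hi h
  have hy2 : φ (X y) = C a' * X y + X t := by rw [hφ2, smul_eq_C_mul]
  have ht2 : φ (X t) = C a' * X t := by rw [hφ3, smul_eq_C_mul]
  have main : ∀ j : ℕ, ∀ d' : Fin (n + 2) →₀ ℕ, d' y = 0 → ∀ k : ℕ, 1 ≤ k →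
      monomial d' 1 * X y ^ j * X t ^ k ∈
        LinearMap.range (LinearMap.id - φ.toLinearMap :
          MvPolynomial (Fin (n + 2)) K →ₗ[K] MvPolynomial (Fin (n + 2)) K) := by
    intro j
    induction j using Nat.strong_induction_on with
    | _ j IH =>
    intro d' hd'y k hk
    set E : K := ∏ i ∈ d'.support, b i ^ d' i with hEdef
    by_cases hμ : E * a' ^ (k + j) = 1
    · -- eigenvalue 1 : use the monomial with one higher y-power
      have hE0 : E ≠ 0 := by
        intro h; rw [h, zero_mul] at hμ; exact zero_ne_one hμ
      have ha0 : a' ≠ 0 := by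
        intro h
        rw [h, zero_pow (by omega : k + j ≠ 0), mul_zero] at hμ
        exact zero_ne_one hμ
      have hkey := key_binomial φ y t a' hy2 ht2 d' E (hE d' hd'y) (j + 1) (k - 1)
      have h2 : (E * a' ^ (k - 1 + j) * ((j : K) + 1)) • (monomial d' (1 : K) * X y ^ j * X t ^ k)
          = - (LinearMap.id - φ.toLinearMap : MvPolynomial (Fin (n + 2)) K →ₗ[K]
                MvPolynomial (Fin (n + 2)) K) (monomial d' (1 : K) * X y ^ (j + 1) * X t ^ (k - 1))
            - ∑ s ∈ Finset.range j, (E * a' ^ (k - 1 + s) * ((j + 1).choose s : K)) •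
                (monomial d' (1 : K) * X y ^ s * X t ^ (k - 1 + (j + 1 - s))) := by
        have e1 : k - 1 + (j + 1 - (j + 1)) = k - 1 := by omega
        have e2 : k - 1 + (j + 1) = k + j := by omega
        have e3 : k - 1 + (j + 1 - j) = k := by omega
        rw [LinearMap.sub_apply, LinearMap.id_apply, AlgHom.toLinearMap_apply, hkey,
            Finset.sum_range_succ, Finset.sum_range_succ, e1, e2, e3, Nat.choose_self,
            Nat.choose_succ_self_right, hμ]
        simp only [smul_eq_C_mul, Nat.cast_one, mul_one, one_mul, C_1, Nat.cast_add]
        ring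
      have hc : E * a' ^ (k - 1 + j) * ((j : K) + 1) ≠ 0 := by
        refine mul_ne_zero (mul_ne_zero hE0 (pow_ne_zero _ ha0)) ?_
        exact_mod_cast Nat.succ_ne_zero j
      have hmem : (E * a' ^ (k - 1 + j) * ((j : K) + 1)) •
          (monomial d' (1 : K) * X y ^ j * X t ^ k) ∈
          LinearMap.range (LinearMap.id - φ.toLinearMap :
            MvPolynomial (Fin (n + 2)) K →ₗ[K] MvPolynomial (Fin (n + 2)) K) := by
        rw [h2]
        refine sub_mem (neg_mem ⟨_, rfl⟩)
          (Submodule.sum_mem _ fun s hs => Submodule.smul_mem _ _ ?_)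
        have hsj := Finset.mem_range.mp hs
        exact IH s hsj d' hd'y _ (by omega)
      have hfin := Submodule.smul_mem
        (LinearMap.range (LinearMap.id - φ.toLinearMap :
          MvPolynomial (Fin (n + 2)) K →ₗ[K] MvPolynomial (Fin (n + 2)) K))
        (E * a' ^ (k - 1 + j) * ((j : K) + 1))⁻¹ hmem
      rwa [smul_smul, inv_mul_cancel₀ hc, one_smul] at hfin
    · -- eigenvalue ≠ 1
      have hkey := key_binomial φ y t a' hy2 ht2 d' E (hE d' hd'y) j k
      have h1 : ((1 : K) - E * a' ^ (k + j)) • (monomial d' (1 : K) * X y ^ j * X t ^ k)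
          = (LinearMap.id - φ.toLinearMap : MvPolynomial (Fin (n + 2)) K →ₗ[K]
                MvPolynomial (Fin (n + 2)) K) (monomial d' (1 : K) * X y ^ j * X t ^ k)
            + ∑ s ∈ Finset.range j, (E * a' ^ (k + s) * (j.choose s : K)) •
                (monomial d' (1 : K) * X y ^ s * X t ^ (k + (j - s))) := by
        have e0 : k + (j - j) = k := by omega
        rw [LinearMap.sub_apply, LinearMap.id_apply, AlgHom.toLinearMap_apply, hkey,
            Finset.sum_range_succ, e0, Nat.choose_self]
        simp only [smul_eq_C_mul, Nat.cast_one, mul_one, C_sub, C_1]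
        ring
      have hne : (1 : K) - E * a' ^ (k + j) ≠ 0 := sub_ne_zero.mpr (Ne.symm hμ)
      have hmem : ((1 : K) - E * a' ^ (k + j)) • (monomial d' (1 : K) * X y ^ j * X t ^ k) ∈
          LinearMap.range (LinearMap.id - φ.toLinearMap :
            MvPolynomial (Fin (n + 2)) K →ₗ[K] MvPolynomial (Fin (n + 2)) K) := by
        rw [h1]
        refine add_mem ⟨_, rfl⟩ (Submodule.sum_mem _ fun s hs => Submodule.smul_mem _ _ ?_)
        exact IH s (Finset.mem_range.mp hs) d' hd'y _ (by omega)
      have hfin := Submodule.smul_mem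
        (LinearMap.range (LinearMap.id - φ.toLinearMap :
          MvPolynomial (Fin (n + 2)) K →ₗ[K] MvPolynomial (Fin (n + 2)) K))
        ((1 : K) - E * a' ^ (k + j))⁻¹ hmem
      rwa [smul_smul, inv_mul_cancel₀ hne, one_smul] at hfin
  -- conclude
  intro p hp
  rw [Submodule.restrictScalars_mem, Ideal.mem_span_singleton] at hp
  obtain ⟨q, rfl⟩ := hp
  have hsum : X t * q = ∑ d ∈ q.support, coeff d q • (X t * monomial d 1) := by
    conv_lhs => rw [as_sum q]
    rw [Finset.mul_sum]
    refine Finset.sum_congr rfl fun d _ => ?_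
    rw [smul_eq_C_mul, mul_left_comm, C_mul_monomial, mul_one]
  rw [hsum]
  refine Submodule.sum_mem _ fun d _ => Submodule.smul_mem _ _ ?_
  have hdec : Finsupp.single t 1 + d
      = d.erase y + Finsupp.single y (d y) + Finsupp.single t 1 := by
    ext i
    by_cases h1 : i = y
    · subst h1
      simp [Finsupp.erase_same, Finsupp.single_eq_of_ne hyt]
    · by_cases h2 : i = t
      · subst h2
        simp [Finsupp.erase_ne (Ne.symm hyt), Finsupp.single_eq_of_ne (Ne.symm hyt)]
        omega
      · simp [Finsupp.erase_ne h1, Finsupp.single_eq_of_ne h1,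
          Finsupp.single_eq_of_ne h2]
  have hX : X t * monomial d (1 : K) = monomial (d.erase y) 1 * X y ^ (d y) * X t ^ 1 := by
    have hXt : (X t : MvPolynomial (Fin (n + 2)) K) = monomial (Finsupp.single t 1) 1 := by
      rw [← X_pow_eq_monomial, pow_one]
    rw [X_pow_eq_monomial, hXt, pow_one, monomial_mul, monomial_mul, monomial_mul]
    simp only [mul_one, one_mul]
    rw [hdec]
  rw [hX]
  exact main (d y) (d.erase y) Finsupp.erase_same 1 le_rfl
end

section
/- Let K be a field of characteristic zero, m a positive integer, and a ∈ K a primitive m-th root of unity. Let φ_a be the K-algebra endomorphism of R = K[x1,x2,x3] defined by φ_a(x1) = a·x1, φ_a(x2) = a·x1 + a·x2, φ_a(x3) = −(1/2)·a·x1 − a·x2 + a·x3, and let δ_a = id − φ_a. Let 𝓒 = ⊕_{m ∤ i} R_i, the direct sum of the homogeneous components R_i of R (with respect to the standard grading) over all degrees i not divisible by m. Then δ_a(𝓒) = 𝓒. -/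
open MvPolynomial

namespace DeltaAuxC

variable {K : Type*} [Field K]

/-- Combined predicate: homogeneous of degree `n` and all monomial weights `≤ t`,
where the weight of a monomial `d` is `d 1 + 2 * d 2`. -/
def HW (n t : ℕ) (p : MvPolynomial (Fin 3) K) : Prop :=
  p.IsHomogeneous n ∧ ∀ d ∈ p.support, d 1 + 2 * d 2 ≤ t

lemma HW_zero (n t : ℕ) : HW n t (0 : MvPolynomial (Fin 3) K) :=
  ⟨isHomogeneous_zero _ _ _, by simp⟩

lemma HW_add {n t : ℕ} {p q : MvPolynomial (Fin 3) K} (hp : HW n t p) (hq : HW n t q) :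
    HW n t (p + q) := by
  classical
  refine ⟨hp.1.add hq.1, fun d hd => ?_⟩
  rcases Finset.mem_union.1 (MvPolynomial.support_add hd) with h | h
  exacts [hp.2 d h, hq.2 d h]

lemma HW_smul {n t : ℕ} (c : K) {p : MvPolynomial (Fin 3) K} (hp : HW n t p) :
    HW n t (c • p) := by
  refine ⟨?_, fun d hd => hp.2 d (MvPolynomial.support_smul hd)⟩
  have := (homogeneousSubmodule (Fin 3) K n).smul_mem c
    ((mem_homogeneousSubmodule n p).2 hp.1)
  exact (mem_homogeneousSubmodule n _).1 this

lemma HW_neg {n t : ℕ} {p : MvPolynomial (Fin 3) K} (hp : HW n t p) : HW n t (-p) := by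
  simpa using HW_smul (-1 : K) hp

lemma HW_sub {n t : ℕ} {p q : MvPolynomial (Fin 3) K} (hp : HW n t p) (hq : HW n t q) :
    HW n t (p - q) := by
  simpa [sub_eq_add_neg] using HW_add hp (HW_neg hq)

lemma HW_mono {n t t' : ℕ} (h : t ≤ t') {p : MvPolynomial (Fin 3) K} (hp : HW n t p) :
    HW n t' p :=
  ⟨hp.1, fun d hd => le_trans (hp.2 d hd) h⟩

lemma HW_mul {n t n' t' : ℕ} {p q : MvPolynomial (Fin 3) K} (hp : HW n t p) (hq : HW n' t' q) :
    HW (n + n') (t + t') (p * q) := by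
  classical
  refine ⟨hp.1.mul hq.1, fun d hd => ?_⟩
  obtain ⟨e, he, f, hf, rfl⟩ := Finset.mem_add.1 (MvPolynomial.support_mul p q hd)
  have h1 := hp.2 e he
  have h2 := hq.2 f hf
  simp only [Finsupp.add_apply]
  omega

lemma HW_one : HW 0 0 (1 : MvPolynomial (Fin 3) K) := by
  classical
  refine ⟨isHomogeneous_one _ _, fun d hd => ?_⟩
  rw [show (1 : MvPolynomial (Fin 3) K) = monomial 0 1 by simp,
    support_monomial] at hd
  simp only [one_ne_zero, if_false, Finset.mem_singleton] at hd
  subst hd; simp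

lemma HW_X0 : HW 1 0 (X 0 : MvPolynomial (Fin 3) K) := by
  refine ⟨isHomogeneous_X _ _, fun d hd => ?_⟩
  rw [support_X] at hd
  simp only [Finset.mem_singleton] at hd
  subst hd
  simp [Finsupp.single_apply]

lemma HW_X1 : HW 1 1 (X 1 : MvPolynomial (Fin 3) K) := by
  refine ⟨isHomogeneous_X _ _, fun d hd => ?_⟩
  rw [support_X] at hd
  simp only [Finset.mem_singleton] at hd
  subst hd
  simp [Finsupp.single_apply]

lemma HW_X2 : HW 1 2 (X 2 : MvPolynomial (Fin 3) K) := by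
  refine ⟨isHomogeneous_X _ _, fun d hd => ?_⟩
  rw [support_X] at hd
  simp only [Finset.mem_singleton] at hd
  subst hd
  simp [Finsupp.single_apply]

lemma HW_pow {n t : ℕ} {p : MvPolynomial (Fin 3) K} (hp : HW n t p) (k : ℕ) :
    HW (k * n) (k * t) (p ^ k) := by
  induction k with
  | zero => simpa using HW_one
  | succ k ih =>
      have := HW_mul ih hp
      rw [pow_succ]
      simpa [Nat.succ_mul] using this

/-- `f1 = φ(x2)/a` -/
noncomputable def f1 : MvPolynomial (Fin 3) K := X 0 + X 1

/-- `f2 = φ(x3)/a` -/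
noncomputable def f2 : MvPolynomial (Fin 3) K := X 2 - X 1 - (1 / 2 : K) • X 0

lemma HW_f1 : HW 1 1 (f1 : MvPolynomial (Fin 3) K) :=
  HW_add (HW_mono (by norm_num) HW_X0) HW_X1

lemma HW_f2 : HW 1 2 (f2 : MvPolynomial (Fin 3) K) :=
  HW_sub (HW_sub HW_X2 (HW_mono (by norm_num) HW_X1))
    (HW_mono (by norm_num) (HW_smul _ HW_X0))

lemma L1 (k : ℕ) : HW (k + 1) k ((f1 : MvPolynomial (Fin 3) K) ^ (k + 1) - X 1 ^ (k + 1)) := by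
  induction k with
  | zero =>
      have h : (f1 : MvPolynomial (Fin 3) K) ^ 1 - X 1 ^ 1 = X 0 := by
        rw [f1]; ring
      rw [h]; exact HW_X0
  | succ k ih =>
      have h : (f1 : MvPolynomial (Fin 3) K) ^ (k + 2) - X 1 ^ (k + 2) =
          (f1 ^ (k + 1) - X 1 ^ (k + 1)) * f1 + X 1 ^ (k + 1) * X 0 := by
        simp only [f1]; ring
      rw [h]
      refine HW_add ?_ ?_
      · simpa using HW_mul ih HW_f1
      · have h1 : HW (k + 1) (k + 1) ((X 1 : MvPolynomial (Fin 3) K) ^ (k + 1)) := by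
          simpa using HW_pow HW_X1 (k + 1)
        simpa using HW_mul h1 HW_X0

lemma L2 (k : ℕ) :
    HW (k + 1) (2 * k + 1) ((f2 : MvPolynomial (Fin 3) K) ^ (k + 1) - X 2 ^ (k + 1)) := by
  induction k with
  | zero =>
      have h : (f2 : MvPolynomial (Fin 3) K) ^ 1 - X 2 ^ 1 = -(X 1) - (1 / 2 : K) • X 0 := by
        rw [f2]; ring_nf
      rw [h]
      exact HW_sub (HW_neg HW_X1) (HW_mono (by norm_num) (HW_smul _ HW_X0))
  | succ k ih =>
      have h : (f2 : MvPolynomial (Fin 3) K) ^ (k + 2) - X 2 ^ (k + 2) =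
          (f2 ^ (k + 1) - X 2 ^ (k + 1)) * f2 + X 2 ^ (k + 1) * (f2 - X 2) := by
        ring
      rw [h]
      refine HW_add ?_ ?_
      · exact HW_mono (by omega) (HW_mul ih HW_f2)
      · have h1 : HW (k + 1) (2 * (k + 1)) ((X 2 : MvPolynomial (Fin 3) K) ^ (k + 1)) := by
          simpa [Nat.mul_comm] using HW_pow HW_X2 (k + 1)
        have h2 : HW 1 1 ((f2 : MvPolynomial (Fin 3) K) - X 2) := by
          have h3 : (f2 : MvPolynomial (Fin 3) K) - X 2 = -(X 1) - (1 / 2 : K) • X 0 := by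
            rw [f2]; ring_nf
          rw [h3]
          exact HW_sub (HW_neg HW_X1) (HW_mono (by norm_num) (HW_smul _ HW_X0))
        refine HW_mono ?_ (HW_mul h1 h2)
        omega

lemma diff_mem (d0 d1 d2 t : ℕ) (h : d1 + 2 * d2 ≤ t + 1) :
    HW (d0 + d1 + d2) t
      ((X 0 : MvPolynomial (Fin 3) K) ^ d0 * (f1 ^ d1 * f2 ^ d2) -
        X 0 ^ d0 * (X 1 ^ d1 * X 2 ^ d2)) := by
  have key : (X 0 : MvPolynomial (Fin 3) K) ^ d0 * (f1 ^ d1 * f2 ^ d2) -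
      X 0 ^ d0 * (X 1 ^ d1 * X 2 ^ d2) =
      X 0 ^ d0 * ((f1 ^ d1 - X 1 ^ d1) * f2 ^ d2 + X 1 ^ d1 * (f2 ^ d2 - X 2 ^ d2)) := by
    ring
  rw [key]
  have hX0 : HW d0 0 ((X 0 : MvPolynomial (Fin 3) K) ^ d0) := by
    simpa [Nat.mul_comm] using HW_pow HW_X0 d0
  have bracket : HW (d1 + d2) t
      (((f1 : MvPolynomial (Fin 3) K) ^ d1 - X 1 ^ d1) * f2 ^ d2 +
        X 1 ^ d1 * (f2 ^ d2 - X 2 ^ d2)) := by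
    have term1 : HW (d1 + d2) t
        (((f1 : MvPolynomial (Fin 3) K) ^ d1 - X 1 ^ d1) * f2 ^ d2) := by
      rcases d1 with _ | j
      · simpa using HW_zero _ _
      · have hf2 : HW d2 (2 * d2) ((f2 : MvPolynomial (Fin 3) K) ^ d2) := by
          simpa [Nat.mul_comm] using HW_pow HW_f2 d2
        refine HW_mono ?_ (HW_mul (L1 j) hf2)
        omega
    have term2 : HW (d1 + d2) t
        ((X 1 : MvPolynomial (Fin 3) K) ^ d1 * (f2 ^ d2 - X 2 ^ d2)) := by
      rcases d2 with _ | j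
      · simpa using HW_zero _ _
      · have hX1 : HW d1 d1 ((X 1 : MvPolynomial (Fin 3) K) ^ d1) := by
          simpa using HW_pow HW_X1 d1
        refine HW_mono ?_ (HW_mul hX1 (L2 j))
        omega
    exact HW_add term1 term2
  have := HW_mul hX0 bracket
  simpa [Nat.add_assoc] using this

lemma deg3 (d : Fin 3 →₀ ℕ) : d.degree = d 0 + d 1 + d 2 := by
  classical
  rw [Finsupp.degree_apply]
  rw [show ∑ i ∈ d.support, d i = ∑ i : Fin 3, d i from
    Finset.sum_subset (Finset.subset_univ _)
      (fun i _ h => Finsupp.notMem_support_iff.1 h)]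
  simp [Fin.sum_univ_three]

lemma homog_deg3 {n : ℕ} {p : MvPolynomial (Fin 3) K} (hp : p.IsHomogeneous n)
    {d : Fin 3 →₀ ℕ} (hd : d ∈ p.support) : d 0 + d 1 + d 2 = n := by
  have := hp (MvPolynomial.mem_support_iff.1 hd)
  rw [show (1 : Fin 3 → ℕ) = fun _ => 1 from rfl, ← Finsupp.degree_eq_weight_one] at this
  rw [← deg3 d]
  exact this

section Phi

variable (a : K) (φ : MvPolynomial (Fin 3) K →ₐ[K] MvPolynomial (Fin 3) K)
  (hφ1 : φ (X 0) = a • X 0)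
  (hφ2 : φ (X 1) = a • X 0 + a • X 1)
  (hφ3 : φ (X 2) = -((1 / 2 * a) • X 0) - a • X 1 + a • X 2)

include hφ1 hφ2 hφ3

lemma phi_X1' : φ (X 1) = a • (f1 : MvPolynomial (Fin 3) K) := by
  rw [hφ2, f1, smul_add]

lemma phi_X2' : φ (X 2) = a • (f2 : MvPolynomial (Fin 3) K) := by
  rw [hφ3, f2]
  module

lemma phi_monomial (d : Fin 3 →₀ ℕ) (c : K) :
    φ (monomial d c) = (a ^ (d 0 + d 1 + d 2) * c) •
      ((X 0 : MvPolynomial (Fin 3) K) ^ d 0 * (f1 ^ d 1 * f2 ^ d 2)) := by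
  have hm : (monomial d c : MvPolynomial (Fin 3) K) =
      c • ((X 0 : MvPolynomial (Fin 3) K) ^ d 0 * (X 1 ^ d 1 * X 2 ^ d 2)) := by
    rw [monomial_eq, Finsupp.prod_pow, Fin.prod_univ_three, smul_eq_C_mul, mul_assoc]
  rw [hm, map_smul, map_mul, map_mul, map_pow, map_pow, map_pow, hφ1,
    phi_X1' a φ hφ1 hφ2 hφ3, phi_X2' a φ hφ1 hφ2 hφ3, smul_pow, smul_pow, smul_pow,
    smul_mul_smul_comm, smul_mul_smul_comm, smul_smul]
  rw [show a ^ d 0 * (a ^ d 1 * a ^ d 2) = a ^ (d 0 + d 1 + d 2) by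
    rw [pow_add, pow_add, mul_assoc]]
  rw [mul_comm c _]

/-- Strict version of the weight predicate. -/
lemma step {n t : ℕ} {p : MvPolynomial (Fin 3) K} (hp : p.IsHomogeneous n)
    (hw : ∀ d ∈ p.support, d 1 + 2 * d 2 < t + 1) :
    (φ p - a ^ n • p).IsHomogeneous n ∧
      ∀ d ∈ (φ p - a ^ n • p).support, d 1 + 2 * d 2 < t := by
  classical
  have key : ∀ d ∈ p.support, HW n t (φ (monomial d (coeff d p)) - a ^ n • monomial d (coeff d p))
      ∧ ∀ e ∈ (φ (monomial d (coeff d p)) - a ^ n • monomial d (coeff d p)).support,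
        e 1 + 2 * e 2 < t := by
    intro d hd
    have hdeg : d 0 + d 1 + d 2 = n := homog_deg3 hp hd
    have hwd : d 1 + 2 * d 2 ≤ t := by have := hw d hd; omega
    have hm : (monomial d (coeff d p) : MvPolynomial (Fin 3) K) =
        coeff d p • ((X 0 : MvPolynomial (Fin 3) K) ^ d 0 * (X 1 ^ d 1 * X 2 ^ d 2)) := by
      rw [monomial_eq, Finsupp.prod_pow, Fin.prod_univ_three, smul_eq_C_mul, mul_assoc]
    have hφm := phi_monomial a φ hφ1 hφ2 hφ3 d (coeff d p)
    rw [hdeg] at hφm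
    have key2 : φ (monomial d (coeff d p)) - a ^ n • monomial d (coeff d p) =
        (a ^ n * coeff d p) •
          ((X 0 : MvPolynomial (Fin 3) K) ^ d 0 * (f1 ^ d 1 * f2 ^ d 2) -
            X 0 ^ d 0 * (X 1 ^ d 1 * X 2 ^ d 2)) := by
      rw [hφm, hm, smul_sub, smul_smul]
    rcases Nat.eq_zero_or_pos (d 1 + 2 * d 2) with h0 | hpos
    · -- the difference is zero
      have h1 : d 1 = 0 := by omega
      have h2 : d 2 = 0 := by omega
      have hz : φ (monomial d (coeff d p)) - a ^ n • monomial d (coeff d p) = 0 := by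
        rw [key2, h1, h2]
        simp
      rw [hz]
      exact ⟨HW_zero _ _, by simp⟩
    · have ht : 1 ≤ t := by omega
      have hdm : HW n (d 1 + 2 * d 2 - 1)
          ((X 0 : MvPolynomial (Fin 3) K) ^ d 0 * (f1 ^ d 1 * f2 ^ d 2) -
            X 0 ^ d 0 * (X 1 ^ d 1 * X 2 ^ d 2)) := by
        have := diff_mem (K := K) (d 0) (d 1) (d 2) (d 1 + 2 * d 2 - 1) (by omega)
        rwa [hdeg] at this
      have hsm := HW_smul (a ^ n * coeff d p) hdm
      rw [← key2] at hsm
      refine ⟨HW_mono (by omega) hsm, fun e he => ?_⟩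
      have := hsm.2 e he
      omega
  -- sum decomposition
  set G : MvPolynomial (Fin 3) K →ₗ[K] MvPolynomial (Fin 3) K :=
    φ.toLinearMap - (a ^ n) • LinearMap.id with hG
  have hGapp : ∀ q : MvPolynomial (Fin 3) K, G q = φ q - a ^ n • q := by
    intro q; simp [hG]
  have hsum : φ p - a ^ n • p = ∑ d ∈ p.support, G (monomial d (coeff d p)) := by
    rw [← map_sum, ← hGapp]
    congr 1
    exact p.as_sum
  rw [hsum]
  have closure : ∀ (s : Finset (Fin 3 →₀ ℕ)), s ⊆ p.support →
      (∑ d ∈ s, G (monomial d (coeff d p))).IsHomogeneous n ∧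
        ∀ e ∈ (∑ d ∈ s, G (monomial d (coeff d p))).support, e 1 + 2 * e 2 < t := by
    intro s
    induction s using Finset.induction_on with
    | empty => intro _; simp; exact isHomogeneous_zero _ _ _
    | insert x s' hx ih =>
        intro hsub
        have hxmem : x ∈ p.support := hsub (Finset.mem_insert_self _ _)
        have hs'sub : s' ⊆ p.support := fun y hy => hsub (Finset.mem_insert_of_mem hy)
        rw [Finset.sum_insert hx]
        obtain ⟨hk1, hk2⟩ := key x hxmem
        obtain ⟨hi1, hi2⟩ := ih hs'sub
        rw [hGapp]
        constructor
        · exact hk1.1.add hi1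
        · intro e he
          rcases Finset.mem_union.1 (MvPolynomial.support_add he) with h | h
          exacts [hk2 e h, hi2 e h]
  exact closure p.support (le_refl _)

lemma nilp (n : ℕ) : ∀ (t : ℕ) (p : MvPolynomial (Fin 3) K), p.IsHomogeneous n →
    (∀ d ∈ p.support, d 1 + 2 * d 2 < t) →
    (fun q => φ q - a ^ n • q)^[t] p = 0 := by
  intro t
  induction t with
  | zero =>
      intro p hp hw
      have : p.support = ∅ :=
        Finset.eq_empty_of_forall_notMem fun d hd => absurd (hw d hd) (Nat.not_lt_zero _)
      simpa using MvPolynomial.support_eq_empty.1 this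
  | succ t ih =>
      intro p hp hw
      rw [Function.iterate_succ_apply]
      obtain ⟨h1, h2⟩ := step a φ hφ1 hφ2 hφ3 hp hw
      exact ih _ h1 h2

lemma homog_g {n : ℕ} {p : MvPolynomial (Fin 3) K} (hp : p.IsHomogeneous n) :
    (φ p - a ^ n • p).IsHomogeneous n := by
  refine (step a φ hφ1 hφ2 hφ3 (t := 2 * n + 1) hp fun d hd => ?_).1
  have := homog_deg3 hp hd
  omega

lemma homog_phi {n : ℕ} {p : MvPolynomial (Fin 3) K} (hp : p.IsHomogeneous n) :
    (φ p).IsHomogeneous n := by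
  have h := homog_g a φ hφ1 hφ2 hφ3 hp
  have : φ p = (φ p - a ^ n • p) + a ^ n • p := by ring
  rw [this]
  refine h.add ?_
  exact (mem_homogeneousSubmodule n _).1
    ((homogeneousSubmodule (Fin 3) K n).smul_mem _ ((mem_homogeneousSubmodule n p).2 hp))

end Phi

end DeltaAuxC

open DeltaAuxC

theorem delta_a_maps_C_onto_C
    {K : Type*} [Field K] [CharZero K] (m : ℕ) (hm : 0 < m) (a : K)
    (ham : a ^ m = 1) (ha : ∀ j : ℕ, 0 < j → j < m → a ^ j ≠ 1)
    (φ : MvPolynomial (Fin 3) K →ₐ[K] MvPolynomial (Fin 3) K)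
    (hφ1 : φ (X 0) = a • X 0)
    (hφ2 : φ (X 1) = a • X 0 + a • X 1)
    (hφ3 : φ (X 2) = -((1 / 2 * a) • X 0) - a • X 1 + a • X 2)
    (δ : MvPolynomial (Fin 3) K →ₗ[K] MvPolynomial (Fin 3) K)
    (hδ : δ = LinearMap.id - φ.toLinearMap)
    (C : Submodule K (MvPolynomial (Fin 3) K))
    (hC : C = ⨆ (i : ℕ) (_ : ¬ m ∣ i), homogeneousSubmodule (Fin 3) K i) :
    Submodule.map δ C = C := by
  have hδapp : ∀ p : MvPolynomial (Fin 3) K, δ p = p - φ p := by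
    intro p; simp [hδ]
  -- key per-degree statement
  have key : ∀ n : ℕ, ¬ m ∣ n →
      Submodule.map δ (homogeneousSubmodule (Fin 3) K n) = homogeneousSubmodule (Fin 3) K n := by
    intro n hn
    have han : a ^ n ≠ 1 := by
      have hmod : a ^ n = a ^ (n % m) := by
        conv_lhs => rw [← Nat.div_add_mod n m]
        rw [pow_add, pow_mul, ham, one_pow, one_mul]
      rw [hmod]
      have h1 : n % m ≠ 0 := fun h => hn (Nat.dvd_of_mod_eq_zero h)
      exact ha (n % m) (Nat.pos_of_ne_zero h1) (Nat.mod_lt n hm)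
    have hsub : (1 : K) - a ^ n ≠ 0 := sub_ne_zero.2 fun h => han h.symm
    apply le_antisymm
    · rintro _ ⟨p, hp, rfl⟩
      have hp' : p.IsHomogeneous n := (mem_homogeneousSubmodule n p).1 hp
      rw [mem_homogeneousSubmodule, hδapp]
      exact hp'.sub (homog_phi a φ hφ1 hφ2 hφ3 hp')
    · intro p hp
      rw [mem_homogeneousSubmodule] at hp
      set u : K := ((1 : K) - a ^ n)⁻¹ with hu
      set g : MvPolynomial (Fin 3) K → MvPolynomial (Fin 3) K :=
        fun q => φ q - a ^ n • q with hg
      have hghom : ∀ j : ℕ, (g^[j] p).IsHomogeneous n := by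
        intro j
        induction j with
        | zero => simpa using hp
        | succ j ih =>
            rw [Function.iterate_succ_apply']
            exact homog_g a φ hφ1 hφ2 hφ3 ih
      have tele : ∀ N : ℕ,
          δ (∑ j ∈ Finset.range N, u ^ (j + 1) • g^[j] p) = p - u ^ N • g^[N] p := by
        intro N
        induction N with
        | zero => simp
        | succ N ih =>
            rw [Finset.sum_range_succ, map_add, ih, map_smul]
            have hδr : ∀ r : MvPolynomial (Fin 3) K,
                δ r = ((1 : K) - a ^ n) • r - g r := by
              intro r
              rw [hδapp, hg]
              simp only [sub_smul, one_smul]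
              abel
            rw [hδr]
            have hgit : g (g^[N] p) = g^[N + 1] p := (Function.iterate_succ_apply' g N p).symm
            rw [hgit, smul_sub, smul_smul]
            have huu : u ^ (N + 1) * ((1 : K) - a ^ n) = u ^ N := by
              rw [pow_succ, mul_assoc, inv_mul_cancel₀ hsub, mul_one]
            rw [huu]
            abel
      have hnil : g^[2 * n + 1] p = 0 :=
        nilp a φ hφ1 hφ2 hφ3 n (2 * n + 1) p hp fun d hd => by
          have := homog_deg3 hp hd; omega
      refine ⟨∑ j ∈ Finset.range (2 * n + 1), u ^ (j + 1) • g^[j] p, ?_, ?_⟩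
      · exact Submodule.sum_mem _ fun j _ =>
          Submodule.smul_mem _ _ ((mem_homogeneousSubmodule _ _).2 (hghom j))
      · rw [tele, hnil]
        simp
  rw [hC, Submodule.map_iSup]
  refine iSup_congr fun i => ?_
  rw [Submodule.map_iSup]
  exact iSup_congr fun h => key i h
end

section
/- Let K be a field of characteristic zero, m a positive integer, and a ∈ K a primitive m-th root of unity. Let φ_a be the K-algebra endomorphism of R = K[x1,x2,x3] defined by φ_a(x1) = a·x1, φ_a(x2) = a·x1 + a·x2, φ_a(x3) = −(1/2)·a·x1 − a·x2 + a·x3, and let δ_a = id − φ_a. Let D = x1·∂_{x2} − x2·∂_{x3} (a K-derivation of R) and let 𝓑 = ⊕_{m | i} R_i, the direct sum of the homogeneous components R_i of R over all degrees i divisible by m. Then δ_a(𝓑) = D(𝓑). -/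
open MvPolynomial

open MvPolynomial Finset

namespace DeltaAuxNN

variable {K : Type*} [Field K] [CharZero K]

abbrev R3 (K : Type*) [Field K] := MvPolynomial (Fin 3) K

noncomputable def expS (D : R3 K →ₗ[K] R3 K) (p : R3 K) (n : ℕ) : R3 K :=
  ∑ k ∈ Finset.range n, ((k.factorial : K)⁻¹) • (D ^ k) p

section generic

variable (D : R3 K →ₗ[K] R3 K)

omit [CharZero K] in
theorem pow_succ_apply (k : ℕ) (p : R3 K) : (D ^ (k+1)) p = D ((D ^ k) p) := by
  rw [pow_succ']; rfl

omit [CharZero K] in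
theorem vanish_mono {n : ℕ} {p : R3 K} (h : (D ^ n) p = 0) {k : ℕ} (hk : n ≤ k) :
    (D ^ k) p = 0 := by
  obtain ⟨j, rfl⟩ := Nat.exists_eq_add_of_le hk
  rw [add_comm, pow_add, Module.End.mul_apply, h, map_zero]

theorem expS_stable {n : ℕ} {p : R3 K} (h : (D ^ n) p = 0) {n' : ℕ} (hn : n ≤ n') :
    expS D p n' = expS D p n := by
  obtain ⟨j, rfl⟩ := Nat.exists_eq_add_of_le hn
  clear hn
  induction j with
  | zero => rfl
  | succ j ih =>
      rw [← add_assoc, expS, Finset.sum_range_succ, ← expS, ih,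
        vanish_mono D h (Nat.le_add_right n j), smul_zero, add_zero]

variable (hmul : ∀ p q : R3 K, D (p * q) = D p * q + p * D q)

include hmul in
omit [CharZero K] in
theorem iter_leibniz (n : ℕ) (p q : R3 K) :
    (D ^ n) (p * q) =
      ∑ k ∈ Finset.range (n + 1), n.choose k • ((D ^ (n - k)) p * (D ^ k) q) := by
  induction n with
  | zero => simp
  | succ n IH =>
    calc
      (D ^ (n + 1)) (p * q) =
          D (∑ k ∈ range (n + 1), n.choose k • ((D ^ (n - k)) p * (D ^ k) q)) := by
        rw [pow_succ_apply, IH]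
      _ = (∑ k ∈ range (n + 1), n.choose k • ((D ^ (n - k + 1)) p * (D ^ k) q)) +
          ∑ k ∈ range (n + 1), n.choose k • ((D ^ (n - k)) p * (D ^ (k + 1)) q) := by
        rw [map_sum]
        simp_rw [map_nsmul, hmul, ← pow_succ_apply, smul_add, sum_add_distrib]
      _ = ((∑ k ∈ range (n + 1),
                n.choose k.succ • ((D ^ (n - k)) p * (D ^ (k + 1)) q)) +
              1 • ((D ^ (n + 1)) p * (D ^ 0) q)) +
            ∑ k ∈ range (n + 1), n.choose k • ((D ^ (n - k)) p * (D ^ (k + 1)) q) := ?_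
      _ = ((∑ k ∈ range (n + 1), n.choose k • ((D ^ (n - k)) p * (D ^ (k + 1)) q)) +
              ∑ k ∈ range (n + 1),
                n.choose k.succ • ((D ^ (n - k)) p * (D ^ (k + 1)) q)) +
            1 • ((D ^ (n + 1)) p * (D ^ 0) q) := by
        abel
      _ = (∑ i ∈ range (n + 1),
              (n + 1).choose (i + 1) • ((D ^ (n + 1 - (i + 1))) p * (D ^ (i + 1)) q)) +
            1 • ((D ^ (n + 1)) p * (D ^ 0) q) := by
        simp_rw [Nat.choose_succ_succ, Nat.succ_sub_succ, add_smul, sum_add_distrib]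
      _ = ∑ k ∈ range (n + 1 + 1),
            (n + 1).choose k • ((D ^ (n + 1 - k)) p * (D ^ k) q) := by
        rw [sum_range_succ' _ (n + 1), Nat.choose_zero_right, tsub_zero]
    congr 1
    refine (sum_range_succ' _ _).trans (congr_arg₂ (· + ·) ?_ ?_)
    · rw [sum_range_succ, Nat.choose_succ_self, zero_smul, add_zero]
      refine sum_congr rfl fun k hk => ?_
      rw [mem_range] at hk
      congr
      omega
    · rw [Nat.choose_zero_right, tsub_zero]

end generic

end DeltaAuxNN

namespace DeltaAuxNN

variable {K : Type*} [Field K] [CharZero K]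

/-- `q` is the exponential `exp(D) p`. -/
def Egood (D : R3 K →ₗ[K] R3 K) (p q : R3 K) : Prop :=
  ∃ n, (D ^ n) p = 0 ∧ expS D p n = q

section generic2

variable (D : R3 K →ₗ[K] R3 K)

theorem Egood_zero : Egood D 0 0 :=
  ⟨0, by simp, by simp [expS]⟩

theorem Egood_add {p q p' q' : R3 K} (h : Egood D p q) (h' : Egood D p' q') :
    Egood D (p + p') (q + q') := by
  obtain ⟨n, hv, rfl⟩ := h
  obtain ⟨n', hv', rfl⟩ := h'
  refine ⟨n ⊔ n', ?_, ?_⟩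
  · rw [map_add, vanish_mono D hv le_sup_left, vanish_mono D hv' le_sup_right, add_zero]
  · rw [← expS_stable D hv (le_sup_left : n ≤ n ⊔ n'),
      ← expS_stable D hv' (le_sup_right : n' ≤ n ⊔ n')]
    simp [expS, map_add, smul_add, sum_add_distrib]

theorem Egood_smul (c : K) {p q : R3 K} (h : Egood D p q) : Egood D (c • p) (c • q) := by
  obtain ⟨n, hv, rfl⟩ := h
  refine ⟨n, by rw [map_smul, hv, smul_zero], ?_⟩
  simp [expS, Finset.smul_sum, map_smul, smul_comm c]

theorem Egood_sum {ι : Type*} (s : Finset ι) (f g : ι → R3 K)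
    (h : ∀ v ∈ s, Egood D (f v) (g v)) :
    Egood D (∑ v ∈ s, f v) (∑ v ∈ s, g v) := by
  classical
  induction s using Finset.cons_induction with
  | empty => simpa using Egood_zero D
  | cons v s hv ih =>
    rw [Finset.sum_cons, Finset.sum_cons]
    exact Egood_add D (h v (Finset.mem_cons_self v s))
      (ih fun w hw => h w (Finset.mem_cons_of_mem hw))

theorem fact_coeff {j k : ℕ} (hj : j ≤ k) :
    (k.factorial : K)⁻¹ * (k.choose j : K) =
      ((k - j).factorial : K)⁻¹ * (j.factorial : K)⁻¹ := by
  have h := Nat.choose_mul_factorial_mul_factorial hj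
  have h2 : ((k.choose j : K)) * (j.factorial : K) * ((k - j).factorial : K)
      = (k.factorial : K) := by exact_mod_cast congrArg (Nat.cast : ℕ → K) h
  have hf1 : ((j.factorial : K)) ≠ 0 := Nat.cast_ne_zero.mpr j.factorial_ne_zero
  have hf2 : ((k.factorial : K)) ≠ 0 := Nat.cast_ne_zero.mpr k.factorial_ne_zero
  have hf3 : (((k - j).factorial : K)) ≠ 0 := Nat.cast_ne_zero.mpr (k - j).factorial_ne_zero
  field_simp
  linear_combination h2

variable (hmul : ∀ p q : R3 K, D (p * q) = D p * q + p * D q)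

include hmul in
theorem Egood_mul {p q p' q' : R3 K} (h : Egood D p q) (h' : Egood D p' q') :
    Egood D (p * p') (q * q') := by
  obtain ⟨n, hv, rfl⟩ := h
  obtain ⟨n', hv', rfl⟩ := h'
  have hzero : ∀ a b : ℕ, n + n' ≤ a + b → (D ^ a) p * (D ^ b) p' = 0 := by
    intro a b hab
    rcases le_or_gt n a with hna | hna
    · rw [vanish_mono D hv hna, zero_mul]
    · rw [vanish_mono D hv' (by omega), mul_zero]
  refine ⟨n + n', ?_, ?_⟩
  · rw [iter_leibniz D hmul]
    refine Finset.sum_eq_zero fun k hk => ?_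
    rw [mem_range] at hk
    rcases le_or_gt k (n + n') with hkle | hklt
    · rw [hzero (n + n' - k) k (by omega), smul_zero]
    · omega
  · rw [← expS_stable D hv (Nat.le_add_right n n'),
      ← expS_stable D hv' (Nat.le_add_left n' n)]
    set N := n + n' with hN
    have key : expS D (p * p') N =
        ∑ m ∈ range N, ∑ k ∈ range (N - m),
          (((k.factorial : K)⁻¹ * (m.factorial : K)⁻¹) • ((D ^ k) p * (D ^ m) p')) := by
      rw [expS]
      have : ∀ k : ℕ, (k.factorial : K)⁻¹ • ((D ^ k) (p * p')) =
          ∑ j ∈ range (k + 1),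
            (((k - j).factorial : K)⁻¹ * (j.factorial : K)⁻¹) • ((D ^ (k - j)) p * (D ^ j) p') := by
        intro k
        rw [iter_leibniz D hmul, Finset.smul_sum]
        refine Finset.sum_congr rfl fun j hj => ?_
        rw [mem_range, Nat.lt_succ_iff] at hj
        rw [← Nat.cast_smul_eq_nsmul K, smul_smul, fact_coeff hj]
      simp_rw [this]
      rw [Finset.sum_range_diag_flip N
        (fun a b => (((b).factorial : K)⁻¹ * ((a).factorial : K)⁻¹) • ((D ^ b) p * (D ^ a) p'))]
    rw [key]
    have ext : ∀ m ∈ range N, ∑ k ∈ range (N - m),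
          (((k.factorial : K)⁻¹ * (m.factorial : K)⁻¹) • ((D ^ k) p * (D ^ m) p')) =
        ∑ k ∈ range N,
          (((k.factorial : K)⁻¹ * (m.factorial : K)⁻¹) • ((D ^ k) p * (D ^ m) p')) := by
      intro m _
      refine Finset.sum_subset (Finset.range_subset_range.mpr (Nat.sub_le N m)) ?_
      intro k hk hk'
      rw [mem_range] at hk hk'
      rw [hzero k m (by omega), smul_zero]
    rw [Finset.sum_congr rfl ext, Finset.sum_comm, expS, expS, Finset.sum_mul_sum]
    refine Finset.sum_congr rfl fun k _ => Finset.sum_congr rfl fun m _ => ?_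
    rw [smul_mul_smul_comm]

include hmul in
theorem Egood_one : Egood D 1 1 := by
  have h1 : D 1 = 0 := by
    have h := hmul 1 1
    rw [mul_one, mul_one, one_mul] at h
    have h2 : D 1 + 0 = D 1 + D 1 := by rw [add_zero]; exact h
    exact (add_left_cancel h2).symm
  exact ⟨1, by simpa [pow_one], by simp [expS]⟩

end generic2

end DeltaAuxNN

namespace DeltaAuxNN

variable {K : Type*} [Field K] [CharZero K]

section generic3

variable (D : R3 K →ₗ[K] R3 K) (hmul : ∀ p q : R3 K, D (p * q) = D p * q + p * D q)

include hmul in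
theorem Egood_pow {p q : R3 K} (h : Egood D p q) (n : ℕ) : Egood D (p ^ n) (q ^ n) := by
  induction n with
  | zero => simpa using Egood_one D hmul
  | succ n ih => rw [pow_succ, pow_succ]; exact Egood_mul D hmul ih h

include hmul in
theorem Egood_C (c : K) : Egood D (C c) (C c) := by
  have h := Egood_smul D c (Egood_one D hmul)
  rwa [smul_eq_C_mul, mul_one] at h

omit [CharZero K] in
theorem monomial_eq_prod (e : Fin 3 →₀ ℕ) (c : K) :
    (monomial e c : R3 K) = C c * (X 0 ^ e 0 * ((X 1 : R3 K) ^ e 1 * X 2 ^ e 2)) := by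
  rw [monomial_eq, Finsupp.prod_pow, Fin.prod_univ_three, mul_assoc]

include hmul in
theorem Egood_monomial {x0 x1 x2 : R3 K}
    (h0 : Egood D (X 0) x0) (h1 : Egood D (X 1) x1) (h2 : Egood D (X 2) x2)
    (e : Fin 3 →₀ ℕ) (c : K) :
    Egood D (monomial e c) (C c * (x0 ^ e 0 * (x1 ^ e 1 * x2 ^ e 2))) := by
  rw [monomial_eq_prod]
  exact Egood_mul D hmul (Egood_C D hmul c)
    (Egood_mul D hmul (Egood_pow D hmul h0 _)
      (Egood_mul D hmul (Egood_pow D hmul h1 _) (Egood_pow D hmul h2 _)))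

end generic3

section concrete

variable (D : R3 K →ₗ[K] R3 K)
  (hD : D = (LinearMap.mulLeft K (X 0)).comp (pderiv 1).toLinearMap
          - (LinearMap.mulLeft K (X 1)).comp (pderiv 2).toLinearMap)

include hD

omit [CharZero K] in
theorem D_apply (p : R3 K) : D p = X 0 * pderiv 1 p - X 1 * pderiv 2 p := by
  rw [hD]; rfl

omit [CharZero K] in
theorem D_mul (p q : R3 K) : D (p * q) = D p * q + p * D q := by
  rw [D_apply D hD, D_apply D hD, D_apply D hD, pderiv_mul, pderiv_mul]; ring

omit [CharZero K] in
theorem D_X0 : D (X 0) = 0 := by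
  rw [D_apply D hD]
  rw [pderiv_X_of_ne (by decide), pderiv_X_of_ne (by decide)]
  ring

omit [CharZero K] in
theorem D_X1 : D (X 1) = X 0 := by
  rw [D_apply D hD]
  rw [pderiv_X_self, pderiv_X_of_ne (by decide)]
  ring

omit [CharZero K] in
theorem D_X2 : D (X 2) = -(X 1) := by
  rw [D_apply D hD]
  rw [pderiv_X_of_ne (by decide), pderiv_X_self]
  ring

theorem Egood_X0 : Egood D (X 0) (X 0) := by
  refine ⟨1, by simpa [pow_one] using D_X0 D hD, by simp [expS]⟩

theorem Egood_X1 : Egood D (X 1) (X 0 + X 1) := by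
  refine ⟨2, ?_, ?_⟩
  · rw [pow_succ_apply, pow_one, D_X1 D hD, D_X0 D hD]
  · rw [expS, Finset.sum_range_succ, Finset.sum_range_one]
    simp [pow_succ_apply, D_X1 D hD]
    ring

theorem Egood_X2 : Egood D (X 2) (-(C (2⁻¹ : K) * X 0) - X 1 + X 2) := by
  have h2 : (D ^ 2) (X 2 : R3 K) = -(X 0) := by
    rw [pow_succ_apply, pow_one, D_X2 D hD, map_neg, D_X1 D hD]
  refine ⟨3, ?_, ?_⟩
  · rw [pow_succ_apply, h2, map_neg, D_X0 D hD, neg_zero]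
  · rw [expS, Finset.sum_range_succ, Finset.sum_range_succ, Finset.sum_range_one]
    rw [h2, pow_one, D_X2 D hD]
    simp only [pow_zero, Module.End.one_apply, Nat.factorial_zero, Nat.factorial_one,
      Nat.factorial_two, Nat.cast_one, Nat.cast_ofNat, inv_one, one_smul]
    ring_nf
    rw [smul_eq_C_mul]
    ring

end concrete

end DeltaAuxNN

namespace DeltaAuxNN

variable {K : Type*} [Field K] [CharZero K]

omit [CharZero K] in
theorem degree_eq_sum_univ (d : Fin 3 →₀ ℕ) : d.degree = ∑ u : Fin 3, d u :=
  Finset.sum_subset (Finset.subset_univ _)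
    (fun x _ hx => Finsupp.notMem_support_iff.mp hx)

section phi

variable (a : K) (φ : R3 K →ₐ[K] R3 K)
  (hφ1 : φ (X 0) = a • X 0)
  (hφ2 : φ (X 1) = a • X 0 + a • X 1)
  (hφ3 : φ (X 2) = -((1 / 2 * a) • X 0) - a • X 1 + a • X 2)

include hφ1 hφ2 hφ3 in
omit [CharZero K] in
theorem phi_monomial {e : Fin 3 →₀ ℕ} (hae : a ^ (e 0 + e 1 + e 2) = 1) (c : K) :
    φ (monomial e c) =
      C c * ((X 0 : R3 K) ^ e 0 *
        ((X 0 + X 1) ^ e 1 * (-(C (2⁻¹ : K) * X 0) - X 1 + X 2) ^ e 2)) := by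
  have hC : ∀ x : K, φ (C x) = C x := fun x => by
    simpa [MvPolynomial.algebraMap_eq] using φ.commutes x
  have h1 : φ (X 0) = C a * X 0 := by rw [hφ1, smul_eq_C_mul]
  have h2 : φ (X 1) = C a * (X 0 + X 1) := by
    rw [hφ2, smul_eq_C_mul, smul_eq_C_mul, mul_add]
  have h3 : φ (X 2) = C a * (-(C (2⁻¹ : K) * X 0) - X 1 + X 2) := by
    rw [hφ3, smul_eq_C_mul, smul_eq_C_mul, smul_eq_C_mul, map_mul]
    rw [one_div]
    ring
  have hone : (C a : R3 K) ^ e 0 * (C a ^ e 1 * C a ^ e 2) = 1 := by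
    rw [← map_pow, ← map_pow, ← map_pow, ← map_mul, ← map_mul, ← pow_add, ← pow_add, ← add_assoc, hae, map_one]
  rw [monomial_eq_prod, map_mul, map_mul, map_mul, map_pow, map_pow, map_pow,
    hC, h1, h2, h3, mul_pow, mul_pow, mul_pow]
  linear_combination (C c * (X 0 : R3 K) ^ e 0 *
      ((X 0 + X 1) ^ e 1 * (-(C (2⁻¹ : K) * X 0) - X 1 + X 2) ^ e 2)) * hone

variable (D : R3 K →ₗ[K] R3 K)
  (hD : D = (LinearMap.mulLeft K (X 0)).comp (pderiv 1).toLinearMap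
          - (LinearMap.mulLeft K (X 1)).comp (pderiv 2).toLinearMap)

include hD hφ1 hφ2 hφ3 in
theorem Egood_hom {m i : ℕ} (ham : a ^ m = 1) (him : m ∣ i) {p : R3 K}
    (hp : p ∈ homogeneousSubmodule (Fin 3) K i) : Egood D p (φ p) := by
  have hmul := D_mul D hD
  rw [mem_homogeneousSubmodule] at hp
  have key : ∀ v ∈ p.support, Egood D (monomial v (coeff v p)) (φ (monomial v (coeff v p))) := by
    intro v hv
    have hdeg : (Finsupp.degree v) = i := by
      rw [Finsupp.degree_eq_weight_one]
      exact hp (mem_support_iff.mp hv)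
    have hsum : v 0 + v 1 + v 2 = i := by
      rw [← hdeg, degree_eq_sum_univ, Fin.sum_univ_three]
    have hae : a ^ (v 0 + v 1 + v 2) = 1 := by
      obtain ⟨t, rfl⟩ := him
      rw [hsum, pow_mul, ham, one_pow]
    rw [phi_monomial a φ hφ1 hφ2 hφ3 hae]
    exact Egood_monomial D hmul (Egood_X0 D hD) (Egood_X1 D hD) (Egood_X2 D hD) v _
  have h := Egood_sum D p.support _ _ key
  rw [← as_sum, ← map_sum, ← as_sum] at h
  exact h

end phi

end DeltaAuxNN

namespace DeltaAuxNN

variable {K : Type*} [Field K] [CharZero K]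

omit [CharZero K] in
theorem sum_single_univ (j l : Fin 3) : ∑ u : Fin 3, (Finsupp.single j 1 : Fin 3 →₀ ℕ) u = 1 := by
  fin_cases j <;> simp [Fin.sum_univ_three, Finsupp.single_apply]

omit [CharZero K] in
theorem hom_term (i : ℕ) (j l : Fin 3) (v : Fin 3 →₀ ℕ) (hv : Finsupp.degree v = i) (c : K) :
    ((X j : R3 K) * monomial (v - Finsupp.single l 1) (c * (v l : K)))
      ∈ homogeneousSubmodule (Fin 3) K i := by
  rcases Nat.eq_zero_or_pos (v l) with h0 | h0
  · rw [h0, Nat.cast_zero, mul_zero, monomial_zero, mul_zero]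
    exact Submodule.zero_mem _
  · have hle : Finsupp.single l 1 ≤ v := Finsupp.single_le_iff.mpr h0
    have hadd : (v - Finsupp.single l 1) + Finsupp.single l 1 = v := tsub_add_cancel_of_le hle
    rw [X, monomial_mul, one_mul, mem_homogeneousSubmodule]
    apply isHomogeneous_monomial
    rw [degree_eq_sum_univ] at hv ⊢
    have h1 : ∑ u : Fin 3, ((Finsupp.single j 1 + (v - Finsupp.single l 1) : Fin 3 →₀ ℕ)) u
        = (∑ u : Fin 3, (Finsupp.single j 1 : Fin 3 →₀ ℕ) u)
          + ∑ u : Fin 3, ((v - Finsupp.single l 1 : Fin 3 →₀ ℕ)) u := by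
      simp [Finsupp.add_apply, Finset.sum_add_distrib]
    have h2 : ((∑ u : Fin 3, ((v - Finsupp.single l 1 : Fin 3 →₀ ℕ)) u)
          + ∑ u : Fin 3, (Finsupp.single l 1 : Fin 3 →₀ ℕ) u) = ∑ u : Fin 3, v u := by
      rw [← Finset.sum_add_distrib]
      refine Finset.sum_congr rfl fun u _ => ?_
      rw [← Finsupp.add_apply, hadd]
    rw [h1, sum_single_univ j l]
    rw [sum_single_univ l l] at h2
    omega

section Dmem

variable (D : R3 K →ₗ[K] R3 K)
  (hD : D = (LinearMap.mulLeft K (X 0)).comp (pderiv 1).toLinearMap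
          - (LinearMap.mulLeft K (X 1)).comp (pderiv 2).toLinearMap)

include hD

omit [CharZero K] in
theorem D_mem {i : ℕ} {p : R3 K} (hp : p ∈ homogeneousSubmodule (Fin 3) K i) :
    D p ∈ homogeneousSubmodule (Fin 3) K i := by
  have hp' := (mem_homogeneousSubmodule _ _).mp hp
  have hrw : D p = ∑ v ∈ p.support, D (monomial v (coeff v p)) := by
    rw [← map_sum, ← as_sum]
  rw [hrw]
  refine Submodule.sum_mem _ fun v hv => ?_
  have hdeg : Finsupp.degree v = i := by
    rw [Finsupp.degree_eq_weight_one]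
    exact hp' (mem_support_iff.mp hv)
  rw [D_apply D hD, pderiv_monomial, pderiv_monomial]
  exact Submodule.sub_mem _ (hom_term i 0 1 v hdeg _) (hom_term i 1 2 v hdeg _)

omit [CharZero K] in
theorem Dpow_mem {i : ℕ} {p : R3 K} (hp : p ∈ homogeneousSubmodule (Fin 3) K i) (k : ℕ) :
    (D ^ k) p ∈ homogeneousSubmodule (Fin 3) K i := by
  induction k with
  | zero => simpa using hp
  | succ k ih => rw [pow_succ_apply]; exact D_mem D hD ih

end Dmem

end DeltaAuxNN

namespace DeltaAuxNN

variable {K : Type*} [Field K] [CharZero K]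

section main

variable (m : ℕ) (a : K)
  (φ : R3 K →ₐ[K] R3 K)
  (hφ1 : φ (X 0) = a • X 0)
  (hφ2 : φ (X 1) = a • X 0 + a • X 1)
  (hφ3 : φ (X 2) = -((1 / 2 * a) • X 0) - a • X 1 + a • X 2)
  (δ : R3 K →ₗ[K] R3 K) (hδ : δ = LinearMap.id - φ.toLinearMap)
  (D : R3 K →ₗ[K] R3 K)
  (hD : D = (LinearMap.mulLeft K (X 0)).comp (pderiv 1).toLinearMap
          - (LinearMap.mulLeft K (X 1)).comp (pderiv 2).toLinearMap)

include hδ in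
omit [CharZero K] in
theorem delta_apply (p : R3 K) : δ p = p - φ p := by
  rw [hδ]; rfl

include hφ1 hφ2 hφ3 hδ hD in
theorem key_surj (ham : a ^ m = 1) {i : ℕ} (him : m ∣ i) :
    ∀ n : ℕ, ∀ p ∈ homogeneousSubmodule (Fin 3) K i, (D ^ n) p = 0 →
      ∃ q ∈ homogeneousSubmodule (Fin 3) K i, δ q = D p := by
  intro n
  induction n with
  | zero =>
    intro p _ hv
    have hp0 : p = 0 := by simpa using hv
    exact ⟨0, Submodule.zero_mem _, by rw [hp0, map_zero, map_zero]⟩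
  | succ n IH =>
    intro p hp hv
    obtain ⟨N, hvN, hSN⟩ := Egood_hom a φ hφ1 hφ2 hφ3 D hD ham him hp
    have hS2 : expS D p (N + 2) = φ p := by
      rw [expS_stable D hvN (by omega)]; exact hSN
    have hφp : φ p - p = D p + ∑ k ∈ Finset.range N, (((k+2).factorial : K)⁻¹) • (D ^ (k+2)) p := by
      rw [← hS2, expS, Finset.sum_range_succ', Finset.sum_range_succ']
      simp only [Nat.factorial_zero, Nat.factorial_one, Nat.cast_one, inv_one, one_smul,
        pow_zero, Module.End.one_apply, pow_one, zero_add]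
      abel
    set s : R3 K := ∑ k ∈ Finset.range N, (((k+2).factorial : K)⁻¹) • (D ^ (k+1)) p with hs
    have hDs : D s = ∑ k ∈ Finset.range N, (((k+2).factorial : K)⁻¹) • (D ^ (k+2)) p := by
      rw [hs, map_sum]
      exact Finset.sum_congr rfl fun k _ => by rw [map_smul, ← pow_succ_apply]
    have hsmem : s ∈ homogeneousSubmodule (Fin 3) K i :=
      Submodule.sum_mem _ fun k _ => Submodule.smul_mem _ _ (Dpow_mem D hD hp (k+1))
    have hvs : (D ^ n) s = 0 := by
      rw [hs, map_sum]
      refine Finset.sum_eq_zero fun k _ => ?_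
      rw [map_smul, ← Module.End.mul_apply, ← pow_add,
        vanish_mono D hv (by omega : n + 1 ≤ n + (k + 1)), smul_zero]
    obtain ⟨q', hq'mem, hq'⟩ := IH s hsmem hvs
    refine ⟨-p - q', Submodule.sub_mem _ (Submodule.neg_mem _ hp) hq'mem, ?_⟩
    rw [map_sub, map_neg, hq', hDs, delta_apply φ δ hδ]
    linear_combination hφp

include hφ1 hφ2 hφ3 hδ hD in
theorem map_eq_on_degree (ham : a ^ m = 1) {i : ℕ} (him : m ∣ i) :
    Submodule.map δ (homogeneousSubmodule (Fin 3) K i)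
      = Submodule.map D (homogeneousSubmodule (Fin 3) K i) := by
  apply le_antisymm
  · rintro x ⟨p, hp, rfl⟩
    obtain ⟨n, hv, hS⟩ := Egood_hom a φ hφ1 hφ2 hφ3 D hD ham him hp
    have hS1 : expS D p (n + 1) = φ p := by
      rw [expS_stable D hv (Nat.le_succ n)]; exact hS
    refine ⟨-∑ k ∈ Finset.range n, (((k+1).factorial : K)⁻¹) • (D ^ k) p,
      Submodule.neg_mem _ (Submodule.sum_mem _ fun k _ =>
        Submodule.smul_mem _ _ (Dpow_mem D hD hp k)), ?_⟩
    have hDsum : D (∑ k ∈ Finset.range n, (((k+1).factorial : K)⁻¹) • (D ^ k) p)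
        = ∑ k ∈ Finset.range n, (((k+1).factorial : K)⁻¹) • (D ^ (k+1)) p := by
      rw [map_sum]
      exact Finset.sum_congr rfl fun k _ => by rw [map_smul, ← pow_succ_apply]
    have hexp : φ p = (∑ k ∈ Finset.range n, (((k+1).factorial : K)⁻¹) • (D ^ (k+1)) p) + p := by
      rw [← hS1, expS, Finset.sum_range_succ']
      simp
    rw [map_neg, hDsum, delta_apply φ δ hδ, hexp]
    abel
  · rintro x ⟨p, hp, rfl⟩
    obtain ⟨n, hv, -⟩ := Egood_hom a φ hφ1 hφ2 hφ3 D hD ham him hp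
    obtain ⟨q, hq, hq'⟩ := key_surj m a φ hφ1 hφ2 hφ3 δ hδ D hD ham him n p hp hv
    exact ⟨q, hq, hq'⟩

end main

end DeltaAuxNN


theorem delta_a_eq_D_on_B
    {K : Type*} [Field K] [CharZero K] (m : ℕ) (hm : 0 < m) (a : K)
    (ham : a ^ m = 1) (ha : ∀ j : ℕ, 0 < j → j < m → a ^ j ≠ 1)
    (φ : MvPolynomial (Fin 3) K →ₐ[K] MvPolynomial (Fin 3) K)
    (hφ1 : φ (X 0) = a • X 0)
    (hφ2 : φ (X 1) = a • X 0 + a • X 1)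
    (hφ3 : φ (X 2) = -((1 / 2 * a) • X 0) - a • X 1 + a • X 2)
    (δ : MvPolynomial (Fin 3) K →ₗ[K] MvPolynomial (Fin 3) K)
    (hδ : δ = LinearMap.id - φ.toLinearMap)
    (D : MvPolynomial (Fin 3) K →ₗ[K] MvPolynomial (Fin 3) K)
    (hD : D = (LinearMap.mulLeft K (X 0)).comp (pderiv 1).toLinearMap
            - (LinearMap.mulLeft K (X 1)).comp (pderiv 2).toLinearMap)
    (B : Submodule K (MvPolynomial (Fin 3) K))
    (hB : B = ⨆ (i : ℕ) (_ : m ∣ i), homogeneousSubmodule (Fin 3) K i) :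
    Submodule.map δ B = Submodule.map D B := by
  rw [hB]
  simp only [Submodule.map_iSup]
  exact iSup_congr fun i => iSup_congr fun him =>
    DeltaAuxNN.map_eq_on_degree m a φ hφ1 hφ2 hφ3 δ hδ D hD ham him
end

section
/- Let K be a field of characteristic zero, m a positive integer, and a ∈ K a primitive m-th root of unity. Let φ_a be the K-algebra endomorphism of R = K[x1,x2,x3] defined by φ_a(x1) = a·x1, φ_a(x2) = a·x1 + a·x2, φ_a(x3) = −(1/2)·a·x1 − a·x2 + a·x3, and let δ_a = id − φ_a. Let D = x1·∂_{x2} − x2·∂_{x3}. Then the image of D is contained in the image of δ_a. -/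
open MvPolynomial Finset

noncomputable def PhiFlow {K : Type*} [Field K] (t : K) :
    MvPolynomial (Fin 3) K →ₐ[K] MvPolynomial (Fin 3) K :=
  aeval ![X 0, X 1 + C t * X 0, X 2 - C t * X 1 - C (t^2/2) * X 0]

section
variable {K : Type*} [Field K]

lemma PhiFlow_X0 (t : K) : PhiFlow t (X 0) = X 0 := by simp [PhiFlow]
lemma PhiFlow_X1 (t : K) : PhiFlow t (X 1) = X 1 + C t * X 0 := by simp [PhiFlow]
lemma PhiFlow_X2 (t : K) : PhiFlow t (X 2) = X 2 - C t * X 1 - C (t^2/2) * X 0 := by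
  simp [PhiFlow]
lemma PhiFlow_C (t c : K) : PhiFlow t (C c) = C c := by simp [PhiFlow, algHom_C]

lemma coeff_one_mul (p q : Polynomial (MvPolynomial (Fin 3) K)) :
    (p * q).coeff 1 = p.coeff 0 * q.coeff 1 + p.coeff 1 * q.coeff 0 := by
  rw [Polynomial.coeff_mul, Finset.Nat.sum_antidiagonal_eq_sum_range_succ_mk]
  simp [Finset.sum_range_succ]

lemma exists_poly (f : MvPolynomial (Fin 3) K) :
    ∃ q : Polynomial (MvPolynomial (Fin 3) K),
      q.coeff 0 = f ∧
      q.coeff 1 = X 0 * pderiv 1 f - X 1 * pderiv 2 f ∧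
      ∀ t : K, PhiFlow t f = q.eval (C t) := by
  induction f using MvPolynomial.induction_on with
  | C c =>
      exact ⟨Polynomial.C (C c), by simp, by simp, fun t => by simp [PhiFlow_C]⟩
  | add p q hp hq =>
      obtain ⟨qp, hp0, hp1, hpe⟩ := hp
      obtain ⟨qq, hq0, hq1, hqe⟩ := hq
      refine ⟨qp + qq, by simp [hp0, hq0], by simp [hp1, hq1]; ring, fun t => by
        simp [map_add, hpe t, hqe t]⟩
  | mul_X p i hp =>
      obtain ⟨qp, hp0, hp1, hpe⟩ := hp
      fin_cases i
      · refine ⟨qp * Polynomial.C (X 0), ?_, ?_, fun t => ?_⟩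
        · simp [Polynomial.coeff_mul_C, hp0]
        · simp [Polynomial.coeff_mul_C, hp1, pderiv_mul, pderiv_X_self, pderiv_X_of_ne]
          ring
        · show PhiFlow t (p * X 0) = _
          rw [map_mul, PhiFlow_X0, hpe t, Polynomial.eval_mul, Polynomial.eval_C]
      · refine ⟨qp * (Polynomial.C (X 1) + Polynomial.C (X 0) * Polynomial.X), ?_, ?_, fun t => ?_⟩
        · simp [Polynomial.mul_coeff_zero, hp0]
        · rw [coeff_one_mul]
          simp [hp0, hp1, pderiv_mul, pderiv_X_self, pderiv_X_of_ne]
          ring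
        · show PhiFlow t (p * X 1) = _
          rw [map_mul, PhiFlow_X1, hpe t]
          simp only [Polynomial.eval_mul, Polynomial.eval_add, Polynomial.eval_C,
            Polynomial.eval_X]
          ring
      · refine ⟨qp * (Polynomial.C (X 2) - Polynomial.C (X 1) * Polynomial.X
            - Polynomial.C ((1/2 : K) • X 0) * Polynomial.X ^ 2), ?_, ?_, fun t => ?_⟩
        · simp [Polynomial.mul_coeff_zero, hp0]
        · rw [coeff_one_mul]
          simp [hp0, hp1, pderiv_mul, pderiv_X_self, pderiv_X_of_ne,
            Polynomial.coeff_one, Polynomial.coeff_X]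
          ring
        · show PhiFlow t (p * X 2) = _
          rw [map_mul, PhiFlow_X2, hpe t]
          simp only [Polynomial.eval_mul, Polynomial.eval_sub, Polynomial.eval_C,
            Polynomial.eval_X, Polynomial.eval_pow]
          rw [smul_eq_C_mul, ← map_pow,
            show (C (t^2/2) : MvPolynomial (Fin 3) K) = C (1/2 : K) * C (t^2) by
              rw [← map_mul]; congr 1; ring]
          ring

lemma phi_pow {K : Type*} [Field K] [CharZero K] (a : K)
    (φ : MvPolynomial (Fin 3) K →ₐ[K] MvPolynomial (Fin 3) K)
    (hφ1 : φ (X 0) = a • X 0)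
    (hφ2 : φ (X 1) = a • X 0 + a • X 1)
    (hφ3 : φ (X 2) = -((1 / 2 * a) • X 0) - a • X 1 + a • X 2) (k : ℕ) :
    (φ ^ k) (X 0) = a ^ k • X 0 ∧
    (φ ^ k) (X 1) = a ^ k • X 1 + ((k : K) * a ^ k) • X 0 ∧
    (φ ^ k) (X 2) = a ^ k • X 2 - ((k : K) * a ^ k) • X 1 - ((k : K) ^ 2 / 2 * a ^ k) • X 0 := by
  induction k with
  | zero => refine ⟨by simp, by simp, by simp⟩
  | succ k ih =>
      obtain ⟨h0, h1, h2⟩ := ih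
      have e : ∀ p, (φ ^ (k + 1)) p = φ ((φ ^ k) p) := fun p => by
        rw [pow_succ']; exact AlgHom.mul_apply _ _ _
      refine ⟨?_, ?_, ?_⟩
      · rw [e, h0, map_smul, hφ1]
        match_scalars <;> ring
      · rw [e, h1, map_add, map_smul, map_smul, hφ1, hφ2]
        match_scalars <;> push_cast <;> ring
      · rw [e, h2, map_sub, map_sub, map_smul, map_smul, map_smul, hφ1, hφ2, hφ3]
        match_scalars <;> push_cast <;> ring

lemma phi_pow_eq_flow {K : Type*} [Field K] [CharZero K] (a : K)
    (φ : MvPolynomial (Fin 3) K →ₐ[K] MvPolynomial (Fin 3) K)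
    (hφ1 : φ (X 0) = a • X 0)
    (hφ2 : φ (X 1) = a • X 0 + a • X 1)
    (hφ3 : φ (X 2) = -((1 / 2 * a) • X 0) - a • X 1 + a • X 2)
    (N : ℕ) (hN : a ^ N = 1) :
    (φ ^ N) = PhiFlow ((N : K)) := by
  obtain ⟨h0, h1, h2⟩ := phi_pow a φ hφ1 hφ2 hφ3 N
  apply algHom_ext
  intro i
  fin_cases i
  · show (φ ^ N) (X 0) = PhiFlow ((N : K)) (X 0)
    rw [h0, hN, PhiFlow_X0, one_smul]
  · show (φ ^ N) (X 1) = PhiFlow ((N : K)) (X 1)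
    rw [h1, hN, PhiFlow_X1]
    simp [smul_eq_C_mul]
  · show (φ ^ N) (X 2) = PhiFlow ((N : K)) (X 2)
    rw [h2, hN, PhiFlow_X2]
    simp [smul_eq_C_mul]

end

theorem range_D_le_range_delta_a
    {K : Type*} [Field K] [CharZero K] (m : ℕ) (hm : 0 < m) (a : K)
    (ham : a ^ m = 1) (ha : ∀ j : ℕ, 0 < j → j < m → a ^ j ≠ 1)
    (φ : MvPolynomial (Fin 3) K →ₐ[K] MvPolynomial (Fin 3) K)
    (hφ1 : φ (X 0) = a • X 0)
    (hφ2 : φ (X 1) = a • X 0 + a • X 1)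
    (hφ3 : φ (X 2) = -((1 / 2 * a) • X 0) - a • X 1 + a • X 2)
    (δ : MvPolynomial (Fin 3) K →ₗ[K] MvPolynomial (Fin 3) K)
    (hδ : δ = LinearMap.id - φ.toLinearMap)
    (D : MvPolynomial (Fin 3) K →ₗ[K] MvPolynomial (Fin 3) K)
    (hD : D = (LinearMap.mulLeft K (X 0)).comp (pderiv 1).toLinearMap
            - (LinearMap.mulLeft K (X 1)).comp (pderiv 2).toLinearMap) :
    LinearMap.range D ≤ LinearMap.range δ := by
  classical
  -- powers of φ minus identity land in range δ
  have hranged : ∀ (N : ℕ) (g : MvPolynomial (Fin 3) K),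
      (φ ^ N) g - g ∈ LinearMap.range δ := by
    intro N g
    refine ⟨-(∑ i ∈ Finset.range N, (φ ^ i) g), ?_⟩
    rw [hδ]
    simp only [LinearMap.sub_apply, LinearMap.id_apply, AlgHom.toLinearMap_apply,
      map_neg, map_sum, sub_neg_eq_add, neg_add_eq_sub]
    have h1 : ∀ i, φ ((φ ^ i) g) = (φ ^ (i + 1)) g := fun i => by
      rw [pow_succ']; exact (AlgHom.mul_apply _ _ _).symm
    simp only [h1]
    rw [← Finset.sum_neg_distrib]
    simp only [neg_sub]
    rw [Finset.sum_range_sub (fun i => (φ ^ i) g)]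
    simp
  rintro y ⟨f, rfl⟩
  obtain ⟨q, hq0, hq1, hqe⟩ := exists_poly (K := K) f
  have hDf : D f = q.coeff 1 := by
    rw [hD, hq1]; simp
  set n := q.natDegree + 1 with hn
  set x : Fin n → K := fun j => (((j : ℕ) + 1) * m : ℕ) with hxdef
  have hxinj : Function.Injective x := by
    intro i j h
    have := Nat.cast_injective (R := K) h
    have h2 := Nat.eq_of_mul_eq_mul_right hm this
    exact Fin.ext (Nat.succ_injective h2)
  have hx0 : ∀ j, x j ≠ 0 := fun j => by
    simp only [hxdef, Ne, Nat.cast_eq_zero]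
    positivity
  set M : Matrix (Fin n) (Fin n) K := Matrix.of fun j k : Fin n => x j ^ ((k : ℕ) + 1) with hMdef
  have hM : M = Matrix.diagonal x * Matrix.vandermonde x := by
    ext j k
    simp [hMdef, Matrix.diagonal_mul, Matrix.vandermonde_apply, pow_succ']
  have hdet : IsUnit M.det := by
    rw [hM, Matrix.det_mul, Matrix.det_diagonal, Matrix.det_vandermonde]
    refine (mul_ne_zero ?_ ?_).isUnit
    · exact Finset.prod_ne_zero_iff.2 fun j _ => hx0 j
    · refine Finset.prod_ne_zero_iff.2 fun i _ => Finset.prod_ne_zero_iff.2 fun j hj => ?_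
      refine sub_ne_zero.2 fun hEq => ?_
      exact absurd (hxinj hEq) (ne_of_gt (Finset.mem_Ioi.1 hj))
  set W := M⁻¹ with hW
  have hWM : W * M = 1 := Matrix.nonsing_inv_mul M hdet
  set v : Fin n → MvPolynomial (Fin 3) K := fun k => q.coeff ((k : ℕ) + 1) with hv
  set u : Fin n → MvPolynomial (Fin 3) K :=
    fun j => (φ ^ (((j : ℕ) + 1) * m)) f - f with hu
  have hueq : ∀ j, u j = ∑ k : Fin n, M j k • v k := by
    intro j
    have hN : a ^ (((j : ℕ) + 1) * m) = 1 := by rw [mul_comm, pow_mul, ham, one_pow]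
    have h1 : (φ ^ (((j : ℕ) + 1) * m)) f = PhiFlow (x j) f := by
      rw [phi_pow_eq_flow a φ hφ1 hφ2 hφ3 _ hN, hxdef]
    have hdeg : q.natDegree < n + 1 := by omega
    rw [hu]
    simp only [h1, hqe (x j), Polynomial.eval_eq_sum_range' hdeg]
    rw [Finset.sum_range_succ']
    simp only [pow_zero, mul_one, hq0]
    rw [add_sub_cancel_right, Finset.sum_range fun i => q.coeff (i + 1) * C (x j) ^ (i + 1)]
    refine Finset.sum_congr rfl fun k _ => ?_
    rw [smul_eq_C_mul, ← map_pow, mul_comm]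
    rfl
  have hlin : ∀ i : Fin n, ∑ j : Fin n, W i j • u j = v i := by
    intro i
    simp only [hueq, Finset.smul_sum, smul_smul]
    rw [Finset.sum_comm]
    have : ∀ k : Fin n, ∑ j : Fin n, (W i j * M j k) • v k = ((W * M) i k) • v k := by
      intro k
      rw [← Finset.sum_smul, Matrix.mul_apply]
    simp only [this, hWM, Matrix.one_apply]
    simp [ite_smul]
  have hnpos : 0 < n := by omega
  have hfin : D f = ∑ j : Fin n, W ⟨0, hnpos⟩ j • u j := by
    rw [hlin ⟨0, hnpos⟩, hDf, hv]
  rw [hfin]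
  refine Submodule.sum_mem _ fun j _ => Submodule.smul_mem _ _ ?_
  exact hranged _ _
end

section
/- Let K be a field of characteristic zero, m a positive integer, and a ∈ K a primitive m-th root of unity. Let φ_a be the K-algebra endomorphism of R = K[x1,x2,x3] defined by φ_a(x1) = a·x1, φ_a(x2) = a·x1 + a·x2, φ_a(x3) = −(1/2)·a·x1 − a·x2 + a·x3, and let δ_a = id − φ_a. If β = (β1,β2,β3) ∈ ℕ³ satisfies −β1 + β3 < 0, then the monomial x1^{β1}·x2^{β2}·x3^{β3} lies in the image of δ_a. -/
open MvPolynomial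

namespace DeltaAux

variable {K : Type*} [Field K]

/-- Span of monomials of exact total degree `d` and weighted degree `β2 + 2·β3 ≤ n`. -/
noncomputable def Vsub (K : Type*) [Field K] (d : ℕ) (n : ℤ) : Submodule K (MvPolynomial (Fin 3) K) :=
  Submodule.span K {p | ∃ c1 c2 c3 : ℕ, c1 + c2 + c3 = d ∧ ((c2 : ℤ) + 2 * c3 ≤ n) ∧
    p = X 0 ^ c1 * X 1 ^ c2 * X 2 ^ c3}

lemma mem_Vsub {d : ℕ} {n : ℤ} {p : MvPolynomial (Fin 3) K} (c1 c2 c3 : ℕ)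
    (hp : p = X 0 ^ c1 * X 1 ^ c2 * X 2 ^ c3) (hd : c1 + c2 + c3 = d)
    (hn : (c2 : ℤ) + 2 * c3 ≤ n) : p ∈ Vsub K d n :=
  Submodule.subset_span ⟨c1, c2, c3, hd, hn, hp⟩

lemma C_mul_mem {d : ℕ} {n : ℤ} {p : MvPolynomial (Fin 3) K} (r : K)
    (h : p ∈ Vsub K d n) : C r * p ∈ Vsub K d n := by
  rw [← smul_eq_C_mul]; exact Submodule.smul_mem _ _ h

lemma Vsub_le {d d' : ℕ} {n n' : ℤ} (hd : d = d') (h : n ≤ n') :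
    Vsub K d n ≤ Vsub K d' n' := by
  subst hd
  exact Submodule.span_mono (fun p ⟨c1, c2, c3, hd, hn, hp⟩ => ⟨c1, c2, c3, hd, hn.trans h, hp⟩)

lemma Vsub_mul {d1 d2 : ℕ} {n1 n2 : ℤ} {p q : MvPolynomial (Fin 3) K}
    (hp : p ∈ Vsub K d1 n1) (hq : q ∈ Vsub K d2 n2) :
    p * q ∈ Vsub K (d1 + d2) (n1 + n2) := by
  induction hp using Submodule.span_induction with
  | mem x hx =>
    obtain ⟨c1, c2, c3, hd, hn, rfl⟩ := hx
    induction hq using Submodule.span_induction with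
    | mem y hy =>
      obtain ⟨e1, e2, e3, hd', hn', rfl⟩ := hy
      refine mem_Vsub (c1 + e1) (c2 + e2) (c3 + e3) (by rw [pow_add, pow_add, pow_add]; ring)
        (by omega) (by push_cast; omega)
    | zero => rw [mul_zero]; exact zero_mem _
    | add y z _ _ hy hz => rw [mul_add]; exact add_mem hy hz
    | smul r y _ hy => rw [mul_smul_comm]; exact Submodule.smul_mem _ _ hy
  | zero => rw [zero_mul]; exact zero_mem _
  | add y z _ _ hy hz => rw [add_mul]; exact add_mem hy hz
  | smul r y _ hy => rw [smul_mul_assoc]; exact Submodule.smul_mem _ _ hy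

/-- Binomial expansion of `(x1 + x2)^k` up to lower-order terms. -/
lemma expand_pow1 (k : ℕ) :
    ∃ e ∈ Vsub K k ((k : ℤ) - 2),
      (X 0 + X 1) ^ k = X 1 ^ k + C (k : K) * (X 0 * X 1 ^ (k - 1)) + e := by
  induction k with
  | zero => exact ⟨0, zero_mem _, by simp⟩
  | succ k ih =>
    obtain ⟨e, he, heq⟩ := ih
    match k, he, heq with
    | 0, he, heq =>
      refine ⟨0, zero_mem _, ?_⟩
      norm_num
      ring
    | (j+1), he, heq =>
      refine ⟨C ((j:K)+1) * (X 0 ^ 2 * X 1 ^ j) + (X 0 + X 1) * e, ?_, ?_⟩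
      · refine add_mem ?_ ?_
        · have h0 : (X 0 ^ 2 * X 1 ^ j : MvPolynomial (Fin 3) K) ∈ Vsub K (j + 2) ((j:ℤ)+1+1-2) :=
            mem_Vsub 2 j 0 (by ring) (by omega) (by omega)
          exact C_mul_mem _ h0
        · have h1 : (X 0 + X 1 : MvPolynomial (Fin 3) K) ∈ Vsub K 1 1 :=
            add_mem (mem_Vsub 1 0 0 (by ring) (by omega) (by omega))
              (mem_Vsub 0 1 0 (by ring) (by omega) (by omega))
          exact Vsub_le (by omega) (by omega) (Vsub_mul h1 he)
      · rw [pow_succ, heq]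
        simp only [Nat.add_sub_cancel]
        push_cast
        simp only [map_add, map_one]
        ring

lemma s_mem (r : K) : (X 2 - X 1 + C r * X 0 : MvPolynomial (Fin 3) K) ∈ Vsub K 1 2 := by
  refine add_mem (sub_mem ?_ ?_) (C_mul_mem _ ?_)
  · exact mem_Vsub 0 0 1 (by ring) (by omega) (by omega)
  · exact mem_Vsub 0 1 0 (by ring) (by omega) (by omega)
  · exact mem_Vsub 1 0 0 (by ring) (by omega) (by omega)

/-- Trinomial expansion of `(x3 - x2 + r·x1)^k` up to lower-order terms. -/
lemma expand_pow2 (r : K) (k : ℕ) :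
    ∃ e ∈ Vsub K k (2 * (k : ℤ) - 2),
      (X 2 - X 1 + C r * X 0) ^ k = X 2 ^ k - C (k : K) * (X 1 * X 2 ^ (k - 1)) + e := by
  induction k with
  | zero => exact ⟨0, zero_mem _, by norm_num⟩
  | succ k ih =>
    obtain ⟨e, he, heq⟩ := ih
    match k, he, heq with
    | 0, he, heq =>
      refine ⟨C r * X 0, C_mul_mem _ (mem_Vsub 1 0 0 (by ring) (by omega) (by omega)), ?_⟩
      norm_num
    | (j+1), he, heq =>
      refine ⟨C r * (X 0 * X 2 ^ (j + 1)) + C ((j:K)+1) * (X 1 ^ 2 * X 2 ^ j)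
          - C ((j:K)+1) * (C r * (X 0 * X 1 * X 2 ^ j)) + (X 2 - X 1 + C r * X 0) * e, ?_, ?_⟩
      · refine add_mem (sub_mem (add_mem ?_ ?_) ?_) ?_
        · exact C_mul_mem _ (mem_Vsub 1 0 (j+1) (by ring) (by omega) (by omega))
        · exact C_mul_mem _ (mem_Vsub 0 2 j (by ring) (by omega) (by omega))
        · exact C_mul_mem _ (C_mul_mem _ (mem_Vsub 1 1 j (by ring) (by omega) (by omega)))
        · exact Vsub_le (by omega) (by omega) (Vsub_mul (s_mem r) he)
      · rw [pow_succ, heq]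
        simp only [Nat.add_sub_cancel]
        push_cast
        simp only [map_add, map_one]
        ring

lemma s_pow_mem (r : K) (k : ℕ) :
    (X 2 - X 1 + C r * X 0 : MvPolynomial (Fin 3) K) ^ k ∈ Vsub K k (2 * (k : ℤ)) := by
  induction k with
  | zero => exact mem_Vsub 0 0 0 (by norm_num) (by omega) (by omega)
  | succ k ih =>
    rw [pow_succ]
    exact Vsub_le (by omega) (by omega) (Vsub_mul ih (s_mem r))

/-- Expansion of `(x1+x2)^{k2} (x3-x2+r·x1)^{k3}` up to lower-order terms. -/
lemma expand_prod (r : K) (k2 k3 : ℕ) :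
    ∃ e ∈ Vsub K (k2 + k3) ((k2 : ℤ) + 2 * k3 - 2),
      (X 0 + X 1) ^ k2 * (X 2 - X 1 + C r * X 0) ^ k3
        = X 1 ^ k2 * X 2 ^ k3 + C (k2 : K) * (X 0 * X 1 ^ (k2 - 1) * X 2 ^ k3)
          - C (k3 : K) * (X 1 ^ (k2 + 1) * X 2 ^ (k3 - 1)) + e := by
  obtain ⟨e1, he1, heq1⟩ := expand_pow1 (K := K) k2
  obtain ⟨e2, he2, heq2⟩ := expand_pow2 r k3
  match k3, he2, heq2 with
  | 0, he2, heq2 =>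
    refine ⟨e1, Vsub_le (by omega) (by omega) he1, ?_⟩
    simp only [Nat.cast_zero, map_zero, zero_mul, sub_zero, pow_zero, mul_one]
    linear_combination heq1
  | (l+1), he2, heq2 =>
    match k2, he1, heq1 with
    | 0, he1, heq1 =>
      refine ⟨e2, Vsub_le (by omega) (by omega) he2, ?_⟩
      simp only [Nat.cast_zero, map_zero, zero_mul, add_zero, pow_zero, one_mul, zero_add]
      linear_combination heq2
    | (i+1), he1, heq1 =>
      simp only [Nat.add_sub_cancel] at heq1 heq2 ⊢
      refine ⟨-(C ((i+1 : ℕ) : K) * (C ((l+1 : ℕ) : K) * (X 0 * (X 1 ^ i * X 1) * X 2 ^ l)))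
          + X 1 ^ (i+1) * e2 + C ((i+1 : ℕ) : K) * ((X 0 * X 1 ^ i) * e2)
          + e1 * (X 2 - X 1 + C r * X 0) ^ (l+1), ?_, ?_⟩
      · refine add_mem (add_mem (add_mem (neg_mem ?_) ?_) ?_) ?_
        · exact C_mul_mem _ (C_mul_mem _ (mem_Vsub 1 (i+1) l (by ring) (by omega) (by omega)))
        · have h0 : (X 1 ^ (i+1) : MvPolynomial (Fin 3) K) ∈ Vsub K (i+1) ((i:ℤ)+1) :=
            mem_Vsub 0 (i+1) 0 (by ring) (by omega) (by omega)
          exact Vsub_le (by omega) (by omega) (Vsub_mul h0 he2)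
        · have h0 : (X 0 * X 1 ^ i : MvPolynomial (Fin 3) K) ∈ Vsub K (i+1) (i:ℤ) :=
            mem_Vsub 1 i 0 (by ring) (by omega) (by omega)
          exact C_mul_mem _ (Vsub_le (by omega) (by omega) (Vsub_mul h0 he2))
        · exact Vsub_le (by omega) (by omega) (Vsub_mul he1 (s_pow_mem r (l+1)))
      · linear_combination (X 2 - X 1 + C r * X 0) ^ (l+1) * heq1
          + (X 1 ^ (i+1) + C ((i+1 : ℕ) : K) * (X 0 * X 1 ^ i)) * heq2

/-- The image of a monomial under `φ`. -/
lemma phi_mon (a : K) (φ : MvPolynomial (Fin 3) K →ₐ[K] MvPolynomial (Fin 3) K)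
    (hφ1 : φ (X 0) = a • X 0)
    (hφ2 : φ (X 1) = a • X 0 + a • X 1)
    (hφ3 : φ (X 2) = -((1 / 2 * a) • X 0) - a • X 1 + a • X 2)
    (c1 c2 c3 : ℕ) :
    φ (X 0 ^ c1 * X 1 ^ c2 * X 2 ^ c3) = C (a ^ (c1 + c2 + c3)) *
      (X 0 ^ c1 * ((X 0 + X 1) ^ c2 * (X 2 - X 1 + C (-(1/2) : K) * X 0) ^ c3)) := by
  have h1 : φ (X 0) = C a * X 0 := by rw [hφ1, smul_eq_C_mul]
  have h2 : φ (X 1) = C a * (X 0 + X 1) := by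
    rw [hφ2, smul_eq_C_mul, smul_eq_C_mul]; ring
  have h3 : φ (X 2) = C a * (X 2 - X 1 + C (-(1/2) : K) * X 0) := by
    rw [hφ3, smul_eq_C_mul, smul_eq_C_mul, smul_eq_C_mul]
    rw [show (1 / 2 * a : K) = a * (1/2) from mul_comm _ _]
    simp only [map_mul, map_neg]
    ring
  rw [map_mul, map_mul, map_pow, map_pow, map_pow, h1, h2, h3, mul_pow, mul_pow, mul_pow,
    ← map_pow, ← map_pow, ← map_pow, pow_add, pow_add, map_mul, map_mul]
  ring

set_option maxHeartbeats 1000000 in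
theorem main_aux {K : Type*} [Field K] [CharZero K] (a : K)
    (φ : MvPolynomial (Fin 3) K →ₐ[K] MvPolynomial (Fin 3) K)
    (hφ1 : φ (X 0) = a • X 0)
    (hφ2 : φ (X 1) = a • X 0 + a • X 1)
    (hφ3 : φ (X 2) = -((1 / 2 * a) • X 0) - a • X 1 + a • X 2)
    (δ : MvPolynomial (Fin 3) K →ₗ[K] MvPolynomial (Fin 3) K)
    (hδ : δ = LinearMap.id - φ.toLinearMap) :
    ∀ n : ℕ, ∀ b3 b1 b2 : ℕ, b2 + 2 * b3 = n → n < b1 + b2 + b3 →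
      X 0 ^ b1 * X 1 ^ b2 * X 2 ^ b3 ∈ LinearMap.range δ := by
  have hδapp : ∀ p, δ p = p - φ p := by
    intro p; rw [hδ]; simp
  intro n
  induction n using Nat.strong_induction_on with
  | _ n IHn =>
  have Vle : ∀ (d' : ℕ) (t : ℤ), t < n → t < d' → Vsub K d' t ≤ LinearMap.range δ := by
    intro d' t htn htd
    rw [Vsub, Submodule.span_le]
    rintro p ⟨c1, c2, c3, hdeg, hm, rfl⟩
    exact IHn (c2 + 2 * c3) (by omega) c3 c1 c2 rfl (by omega)
  intro b3
  induction b3 using Nat.strong_induction_on with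
  | _ b3 IHb3 =>
  intro b1 b2 hn hdlt
  obtain ⟨c, rfl⟩ : ∃ c, b1 = c + 1 := ⟨b1 - 1, by omega⟩
  by_cases had : a ^ (c + 1 + b2 + b3) = 1
  · -- case `a^d = 1`
    obtain ⟨e, he, heq⟩ := expand_prod (K := K) (-(1/2) : K) (b2 + 1) b3
    simp only [Nat.add_sub_cancel] at heq
    have hq : φ (X 0 ^ c * X 1 ^ (b2+1) * X 2 ^ b3)
        = X 0 ^ c * ((X 0 + X 1) ^ (b2+1) * (X 2 - X 1 + C (-(1/2) : K) * X 0) ^ b3) := by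
      rw [phi_mon a φ hφ1 hφ2 hφ3, show c + (b2+1) + b3 = c + 1 + b2 + b3 by omega, had,
        map_one, one_mul]
    have key : δ (X 0 ^ c * X 1 ^ (b2+1) * X 2 ^ b3)
        = -(C ((b2:K)+1) * (X 0 ^ (c+1) * X 1 ^ b2 * X 2 ^ b3))
          + C (b3:K) * (X 0 ^ c * X 1 ^ (b2+2) * X 2 ^ (b3-1))
          - X 0 ^ c * e := by
      rw [hδapp, hq]
      push_cast at heq ⊢
      linear_combination (-(X 0 ^ c : MvPolynomial (Fin 3) K)) * heq
    have h1 : -δ (X 0 ^ c * X 1 ^ (b2+1) * X 2 ^ b3) ∈ LinearMap.range δ :=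
      neg_mem ⟨_, rfl⟩
    have h2 : C (b3:K) * (X 0 ^ c * X 1 ^ (b2+2) * X 2 ^ (b3-1)) ∈ LinearMap.range δ := by
      match b3 with
      | 0 => simp
      | (l+1) =>
        rw [← smul_eq_C_mul]
        refine Submodule.smul_mem _ _ ?_
        exact IHb3 l (by omega) c (b2+2) (by omega) (by omega)
    have h3 : X 0 ^ c * e ∈ LinearMap.range δ := by
      have hx : (X 0 ^ c : MvPolynomial (Fin 3) K) ∈ Vsub K c 0 :=
        mem_Vsub c 0 0 (by ring) (by omega) (by omega)
      refine Vle (c + (b2+1+b3)) (0 + ((b2+1 : ℤ) + 2 * b3 - 2)) (by omega) (by omega) ?_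
      exact Vsub_mul hx he
    have hmem : ((b2:K)+1) • (X 0 ^ (c+1) * X 1 ^ b2 * X 2 ^ b3) ∈ LinearMap.range δ := by
      rw [smul_eq_C_mul]
      have : C ((b2:K)+1) * (X 0 ^ (c+1) * X 1 ^ b2 * X 2 ^ b3)
          = -δ (X 0 ^ c * X 1 ^ (b2+1) * X 2 ^ b3)
            + C (b3:K) * (X 0 ^ c * X 1 ^ (b2+2) * X 2 ^ (b3-1)) - X 0 ^ c * e := by
        linear_combination key
      rw [this]
      exact sub_mem (add_mem h1 h2) h3
    have hne : ((b2:K)+1) ≠ 0 := Nat.cast_add_one_ne_zero b2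
    have := Submodule.smul_mem _ (((b2:K)+1)⁻¹) hmem
    rwa [inv_smul_smul₀ hne] at this
  · -- case `a^d ≠ 1`
    obtain ⟨e, he, heq⟩ := expand_prod (K := K) (-(1/2) : K) b2 b3
    have hq : φ (X 0 ^ (c+1) * X 1 ^ b2 * X 2 ^ b3)
        = C (a ^ (c+1+b2+b3)) *
          (X 0 ^ (c+1) * ((X 0 + X 1) ^ b2 * (X 2 - X 1 + C (-(1/2) : K) * X 0) ^ b3)) :=
      phi_mon a φ hφ1 hφ2 hφ3 (c+1) b2 b3
    set w : MvPolynomial (Fin 3) K :=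
      C (b2:K) * (X 0 ^ (c+1) * (X 0 * X 1 ^ (b2-1) * X 2 ^ b3))
      - C (b3:K) * (X 0 ^ (c+1) * (X 1 ^ (b2+1) * X 2 ^ (b3-1)))
      + X 0 ^ (c+1) * e with hw
    have key : C (1 - a ^ (c+1+b2+b3)) * (X 0 ^ (c+1) * X 1 ^ b2 * X 2 ^ b3)
        = δ (X 0 ^ (c+1) * X 1 ^ b2 * X 2 ^ b3) + C (a ^ (c+1+b2+b3)) * w := by
      rw [hδapp, hq, hw, map_sub, map_one]
      linear_combination (C (a ^ (c+1+b2+b3)) * X 0 ^ (c+1) : MvPolynomial (Fin 3) K) * heq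
    have hwmem : w ∈ Vsub K (c+1+b2+b3) ((n : ℤ) - 1) := by
      rw [hw]
      refine add_mem (sub_mem ?_ ?_) ?_
      · rcases b2 with _ | i
        · simp
        · simp only [Nat.add_sub_cancel]
          exact C_mul_mem _ (mem_Vsub (c+2) i b3 (by ring) (by omega) (by omega))
      · rcases b3 with _ | l
        · simp
        · simp only [Nat.add_sub_cancel]
          exact C_mul_mem _ (mem_Vsub (c+1) (b2+1) l (by ring) (by omega) (by omega))
      · have hx : (X 0 ^ (c+1) : MvPolynomial (Fin 3) K) ∈ Vsub K (c+1) 0 :=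
          mem_Vsub (c+1) 0 0 (by ring) (by omega) (by omega)
        exact Vsub_le (by omega) (by omega) (Vsub_mul hx he)
    have hwrange : w ∈ LinearMap.range δ :=
      Vle (c+1+b2+b3) ((n : ℤ) - 1) (by omega) (by omega) hwmem
    have hmem : (1 - a ^ (c+1+b2+b3)) • (X 0 ^ (c+1) * X 1 ^ b2 * X 2 ^ b3)
        ∈ LinearMap.range δ := by
      rw [smul_eq_C_mul, key]
      refine add_mem ⟨_, rfl⟩ ?_
      rw [← smul_eq_C_mul]
      exact Submodule.smul_mem _ _ hwrange
    have hne : (1 - a ^ (c+1+b2+b3)) ≠ 0 := sub_ne_zero.2 (Ne.symm had)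
    have := Submodule.smul_mem _ ((1 - a ^ (c+1+b2+b3))⁻¹) hmem
    rwa [inv_smul_smul₀ hne] at this

end DeltaAux

theorem monomial_of_negative_omega_degree_mem_range_delta_a
    {K : Type*} [Field K] [CharZero K] (m : ℕ) (hm : 0 < m) (a : K)
    (ham : a ^ m = 1) (ha : ∀ j : ℕ, 0 < j → j < m → a ^ j ≠ 1)
    (φ : MvPolynomial (Fin 3) K →ₐ[K] MvPolynomial (Fin 3) K)
    (hφ1 : φ (X 0) = a • X 0)
    (hφ2 : φ (X 1) = a • X 0 + a • X 1)
    (hφ3 : φ (X 2) = -((1 / 2 * a) • X 0) - a • X 1 + a • X 2)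
    (δ : MvPolynomial (Fin 3) K →ₗ[K] MvPolynomial (Fin 3) K)
    (hδ : δ = LinearMap.id - φ.toLinearMap)
    (β1 β2 β3 : ℕ) (hβ : -(β1 : ℤ) + (β3 : ℤ) < 0) :
    X 0 ^ β1 * X 1 ^ β2 * X 2 ^ β3 ∈ LinearMap.range δ := by
  exact DeltaAux.main_aux a φ hφ1 hφ2 hφ3 δ hδ (β2 + 2 * β3) β3 β1 β2 rfl (by omega)
end

section
/- Let K be a field of characteristic zero and let η be a K-linear endomorphism of the polynomial ring K[x1,...,xn] that is graded with respect to the standard grading (i.e., η maps homogeneous polynomials of degree d to homogeneous polynomials of degree d for every d). Fix a monomial ordering on K[x1,...,xn], and suppose that for every nonzero multi-index β ∈ ℕⁿ the leading term of η(X^β) with respect to this ordering equals a_β·X^β for some nonzero a_β ∈ K. Then X^β lies in the image of η for every nonzero β ∈ ℕⁿ. -/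
open MvPolynomial
open scoped MonomialOrder

theorem monomials_mem_range_of_leading_term_diagonal
    {K : Type*} [Field K] [CharZero K] {n : ℕ}
    (η : MvPolynomial (Fin n) K →ₗ[K] MvPolynomial (Fin n) K)
    (hgraded : ∀ (d : ℕ) (f : MvPolynomial (Fin n) K),
      f.IsHomogeneous d → (η f).IsHomogeneous d)
    (m : MonomialOrder (Fin n))
    (hLT : ∀ β : Fin n →₀ ℕ, β ≠ 0 →
      ∃ a : K, a ≠ 0 ∧ coeff β (η (monomial β 1)) = a ∧
        ∀ γ ∈ (η (monomial β 1)).support, γ ≠ β → γ ≺[m] β) :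
    ∀ β : Fin n →₀ ℕ, β ≠ 0 →
      (monomial β 1 : MvPolynomial (Fin n) K) ∈ LinearMap.range η := by
  intro β
  induction β using WellFounded.induction (InvImage.wf m.toSyn wellFounded_lt) with
  | _ β ih =>
  intro hβ
  obtain ⟨a, ha0, hcoeff, hlt⟩ := hLT β hβ
  set p := η (monomial β 1) with hp
  -- p is homogeneous of degree β.degree
  have hhom : p.IsHomogeneous β.degree :=
    hgraded _ _ (isHomogeneous_monomial 1 rfl)
  have hβmem : β ∈ p.support := by
    rw [mem_support_iff, hcoeff]; exact ha0
  -- every γ in support is nonzero and ≺ β (if ≠ β)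
  have hγne : ∀ γ ∈ p.support, γ ≠ 0 := by
    intro γ hγ h0
    have : γ.degree = β.degree := by
      have := hhom (mem_support_iff.mp hγ)
      simp only [Finsupp.degree_eq_weight_one] at this ⊢
      exact this
    rw [h0] at this
    apply hβ
    have : β.degree = 0 := this.symm
    simpa [Finsupp.degree_eq_zero_iff] using this
  -- decompose p
  have hdecomp : p = monomial β a +
      ∑ γ ∈ p.support.erase β, monomial γ (coeff γ p) := by
    conv_lhs => rw [← support_sum_monomial_coeff p]
    rw [← Finset.add_sum_erase _ _ hβmem, hcoeff]
  have hmem : ∀ γ ∈ p.support.erase β,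
      (monomial γ (coeff γ p) : MvPolynomial (Fin n) K) ∈ LinearMap.range η := by
    intro γ hγ
    have hγs := Finset.mem_of_mem_erase hγ
    have hγβ := Finset.ne_of_mem_erase hγ
    have h1 : (monomial γ 1 : MvPolynomial (Fin n) K) ∈ LinearMap.range η :=
      ih γ (hlt γ hγs hγβ) (hγne γ hγs)
    have : (monomial γ (coeff γ p) : MvPolynomial (Fin n) K)
        = (coeff γ p) • monomial γ 1 := by
      rw [smul_monomial, smul_eq_mul, mul_one]
    rw [this]
    exact Submodule.smul_mem _ _ h1
  have hpmem : p ∈ LinearMap.range η := ⟨monomial β 1, rfl⟩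
  have hsum : (∑ γ ∈ p.support.erase β, monomial γ (coeff γ p) :
      MvPolynomial (Fin n) K) ∈ LinearMap.range η :=
    Submodule.sum_mem _ hmem
  have hβa : (monomial β a : MvPolynomial (Fin n) K) ∈ LinearMap.range η := by
    have : (monomial β a : MvPolynomial (Fin n) K)
        = p - ∑ γ ∈ p.support.erase β, monomial γ (coeff γ p) :=
      eq_sub_of_add_eq hdecomp.symm
    rw [this]
    exact Submodule.sub_mem _ hpmem hsum
  have : (monomial β 1 : MvPolynomial (Fin n) K) = a⁻¹ • monomial β a := by
    rw [smul_monomial, smul_eq_mul, inv_mul_cancel₀ ha0]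
  rw [this]
  exact Submodule.smul_mem _ _ hβa
end

section
/- Let K be a field of characteristic zero, R a commutative K-algebra, η : R → R a K-linear map, and L a field extension of K. If the image of the L-linear map id_L ⊗ η on L ⊗_K R is a Mathieu-Zhao subspace of the L-algebra L ⊗_K R, then the image of η is a Mathieu-Zhao subspace of R. -/
open scoped TensorProduct

/-- A `K`-subspace `M` of a commutative `K`-algebra `R` is a Mathieu-Zhao subspace if
for all `a, b ∈ R`, whenever `a ^ m ∈ M` for all positive integers `m`,
then `b * a ^ m ∈ M` for all sufficiently large `m`. -/
def IsMZSubspace {K R : Type*} [CommRing K] [CommRing R] [Algebra K R]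
    (M : Submodule K R) : Prop :=
  ∀ a b : R, (∀ m : ℕ, 0 < m → a ^ m ∈ M) →
    ∃ N : ℕ, ∀ m : ℕ, N ≤ m → b * a ^ m ∈ M

lemma eq_zero_of_one_tmul_eq_zero {K L V : Type*} [Field K] [Field L] [Algebra K L]
    [AddCommGroup V] [Module K V] {v : V} (h : (1:L) ⊗ₜ[K] v = 0) : v = 0 := by
  obtain ⟨f, hf⟩ := (LinearMap.toSpanSingleton K L 1).exists_leftInverse_of_injective
    (LinearMap.ker_toSpanSingleton (R := K) (M := L) one_ne_zero)
  have hf1 : f 1 = 1 := by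
    have := LinearMap.congr_fun hf (1 : K)
    simpa using this
  have := congrArg (TensorProduct.lift ((LinearMap.lsmul K V).comp f)) h
  simpa [hf1] using this

lemma mem_range_of_one_tmul_mem {K L R : Type*} [Field K] [Field L] [Algebra K L]
    [CommRing R] [Algebra K R] (η : R →ₗ[K] R) {y : R}
    (hy : (1:L) ⊗ₜ[K] y ∈ LinearMap.range (LinearMap.baseChange L η)) :
    y ∈ LinearMap.range η := by
  obtain ⟨t, ht⟩ := hy
  set M := LinearMap.range η with hM
  have h0 : (1:L) ⊗ₜ[K] (M.mkQ y) = 0 := by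
    have h1 : (LinearMap.lTensor L M.mkQ) ((1:L) ⊗ₜ[K] y)
        = (LinearMap.lTensor L M.mkQ) ((LinearMap.baseChange L η) t) := by rw [ht]
    rw [LinearMap.lTensor_tmul] at h1
    rw [h1]
    have h2 : (LinearMap.lTensor L M.mkQ).comp (LinearMap.lTensor L η)
        = LinearMap.lTensor L (M.mkQ.comp η) := (LinearMap.lTensor_comp L _ _).symm
    have h3 : M.mkQ.comp η = 0 := by
      ext r
      simp [hM]
    have h4 : (LinearMap.baseChange L η) t = (LinearMap.lTensor L η) t := by
      rw [← LinearMap.baseChange_eq_ltensor]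
    rw [h4, ← LinearMap.comp_apply, h2, h3]
    simp
  have := eq_zero_of_one_tmul_eq_zero (K := K) h0
  rwa [Submodule.mkQ_apply, Submodule.Quotient.mk_eq_zero] at this

theorem isMZ_of_isMZ_baseChange
    {K L R : Type*} [Field K] [CharZero K] [Field L] [Algebra K L]
    [CommRing R] [Algebra K R]
    (η : R →ₗ[K] R)
    (h : IsMZSubspace (LinearMap.range (LinearMap.baseChange L η))) :
    IsMZSubspace (LinearMap.range η) := by
  intro a b ha
  obtain ⟨N, hN⟩ := h ((1:L) ⊗ₜ[K] a) ((1:L) ⊗ₜ[K] b) (by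
    intro m hm
    obtain ⟨r, hr⟩ := ha m hm
    refine ⟨(1:L) ⊗ₜ[K] r, ?_⟩
    rw [LinearMap.baseChange_tmul, hr, Algebra.TensorProduct.tmul_pow, one_pow])
  refine ⟨N, fun m hm => ?_⟩
  have := hN m hm
  rw [Algebra.TensorProduct.tmul_pow, one_pow, Algebra.TensorProduct.tmul_mul_tmul,
    one_mul] at this
  exact mem_range_of_one_tmul_mem (L := L) η this
end
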